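/- arXiv:1307.0624 — 13 statements merged into one kernel-verified Lean document; each statement's English description precedes it below -/
import Mathlib

section
/- Let (ρ(i))_{i∈ℕ, i≥1} be independent random variables, each uniformly distributed on [0,1]. For every integer k ≥ 1 and every t ∈ (0,1], with probability 1 the set {i : ρ(i) ≥ t and #{j < i : ρ(j) < ρ(i)} = k−1} is finite; that is, with probability 1 only finitely many k-potentials arrive in [t,1]. -/
open MeasureTheory ProbabilityTheory Filter Finset
open scoped ENNReal NNReal

/-! If the item of rank `i` is a `k`-potential arriving at time `≥ t`, then at least
`i - (k - 1)` of the `i` better items also arrive at time `≥ t`, since any of them arriving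
before `t` arrives before item `i`. For independent uniform arrival times this has probability
at most `C(i, k - 1) (1 - t) ^ (i - k + 1)`, which is summable in `i` when `t > 0`, so by
Borel–Cantelli only finitely many such events occur. -/

noncomputable def countIn {Ω β : Type*} (ρ : ℕ → Ω → β) (A : Set β) (n : ℕ) (ω : Ω) : ℕ :=
  {j | j < n ∧ ρ j ω ∈ A}.ncard

lemma le_ncard_lt_add_ncard_le {α : Type*} [LinearOrder α] {x : ℕ → α} {t : α} {i : ℕ}
    (hti : t ≤ x i) :
    i ≤ {j | j < i ∧ x j < x i}.ncard + {j | j < i ∧ t ≤ x j}.ncard := by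
  have hcover : Set.Iio i ⊆ {j | j < i ∧ x j < x i} ∪ {j | j < i ∧ t ≤ x j} := by
    intro j hj
    rcases lt_or_ge (x j) t with h | h
    · exact Or.inl ⟨hj, h.trans_le hti⟩
    · exact Or.inr ⟨hj, h⟩
  have hfin (P : ℕ → Prop) : {j | j < i ∧ P j}.Finite := (Set.finite_Iio i).subset fun j hj => hj.1
  calc i = (Set.Iio i).ncard := (Set.ncard_Iio_nat i).symm
    _ ≤ _ := Set.ncard_le_ncard hcover ((hfin _).union (hfin _))
    _ ≤ _ := Set.ncard_union_le _ _

section CountIn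

variable {Ω β : Type*} {ρ : ℕ → Ω → β} {A : Set β}

lemma setOf_le_countIn_subset (n r : ℕ) :
    {ω | r ≤ countIn ρ A n ω} ⊆ ⋃ s ∈ (range n).powersetCard r, ⋂ j ∈ s, ρ j ⁻¹' A := by
  classical
  intro ω hω
  have hset : {j | j < n ∧ ρ j ω ∈ A} = ↑((range n).filter fun j => ρ j ω ∈ A) := by
    ext j; simp
  obtain ⟨s, hs, hcard⟩ :=
    exists_subset_card_eq (s := (range n).filter fun j => ρ j ω ∈ A) (n := r)
      (by rw [← Set.ncard_coe_finset, ← hset]; exact hω)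
  refine Set.mem_iUnion₂.2 ⟨s, mem_powersetCard.2 ⟨hs.trans (filter_subset _ _), hcard⟩, ?_⟩
  exact Set.mem_iInter₂.2 fun j hj => (mem_filter.1 (hs hj)).2

lemma ProbabilityTheory.iIndepFun.measure_le_countIn_le [MeasurableSpace Ω] [MeasurableSpace β]
    {μ : Measure Ω} (hindep : iIndepFun ρ μ)
    (hA : MeasurableSet A) {p : ℝ≥0∞} (hp : ∀ j, μ (ρ j ⁻¹' A) = p) (n r : ℕ) :
    μ {ω | r ≤ countIn ρ A n ω} ≤ n.choose r * p ^ r :=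
  calc μ {ω | r ≤ countIn ρ A n ω}
      ≤ μ (⋃ s ∈ (range n).powersetCard r, ⋂ j ∈ s, ρ j ⁻¹' A) :=
        measure_mono (setOf_le_countIn_subset n r)
    _ ≤ ∑ s ∈ (range n).powersetCard r, μ (⋂ j ∈ s, ρ j ⁻¹' A) := measure_biUnion_finset_le _ _
    _ = ∑ s ∈ (range n).powersetCard r, p ^ r := by
        refine sum_congr rfl fun s hs => ?_
        rw [hindep.meas_biInter fun j _ => ⟨A, hA, rfl⟩, ← (mem_powersetCard.1 hs).2]
        simp only [hp, prod_const]
    _ = n.choose r * p ^ r := by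
        rw [sum_const, card_powersetCard, card_range, nsmul_eq_mul]

end CountIn

lemma ENNReal.tsum_choose_sub_mul_pow_sub_ne_top {q : ℝ≥0∞} (hq : q < 1) (m : ℕ) :
    ∑' n, (n.choose (n - m) : ℝ≥0∞) * q ^ (n - m) ≠ ∞ := by
  lift q to ℝ≥0 using hq.ne_top
  have hq' : ‖(q : ℝ)‖ < 1 := by simpa using hq
  have hshift : Summable fun n => ((n + m).choose m : ℝ) * (q : ℝ) ^ n :=
    summable_choose_mul_geometric_of_norm_lt_one m hq'
  have hsum : Summable fun n => (n.choose (n - m) : ℝ≥0) * q ^ (n - m) := by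
    rw [← NNReal.summable_coe, ← summable_nat_add_iff m]
    refine hshift.congr fun n => ?_
    rw [Nat.add_sub_cancel, ← Nat.choose_symm_add]
    push_cast; rfl
  simpa using ENNReal.tsum_coe_ne_top_iff_summable.2 hsum

lemma measure_preimage_Ici_of_map_eq_uniform {Ω : Type*} [MeasurableSpace Ω] {μ : Measure Ω}
    {X : Ω → ℝ} (hX : Measurable X) (hunif : μ.map X = volume.restrict (Set.Icc 0 1))
    {t : ℝ} (ht : 0 ≤ t) : μ (X ⁻¹' Set.Ici t) = ENNReal.ofReal (1 - t) := by
  rw [← Measure.map_apply hX measurableSet_Ici, hunif, Measure.restrict_apply measurableSet_Ici,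
    ← Set.Ici_inter_Iic, ← Set.inter_assoc, Set.Ici_inter_Ici, max_eq_left ht, Set.Ici_inter_Iic,
    Real.volume_Icc]

theorem finitely_many_potentials_after_t_general
    {Ω : Type*} [MeasurableSpace Ω] (μ : Measure Ω) [IsProbabilityMeasure μ]
    (ρ : ℕ → Ω → ℝ) (hmeas : ∀ i, Measurable (ρ i))
    (hindep : iIndepFun ρ μ)
    (hunif : ∀ i, Measure.map (ρ i) μ = volume.restrict (Set.Icc (0 : ℝ) 1))
    (k : ℕ) (t : ℝ) (ht : t ∈ Set.Ioc (0 : ℝ) 1) :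
    μ {ω | {i : ℕ | t ≤ ρ i ω ∧ {j : ℕ | j < i ∧ ρ j ω < ρ i ω}.ncard = k - 1}.Finite} = 1 := by
  have hp j := measure_preimage_Ici_of_map_eq_uniform (hmeas j) (hunif j) ht.1.le
  have hq : ENNReal.ofReal (1 - t) < 1 := ENNReal.ofReal_lt_one.2 (by linarith [ht.1])
  have hbad : ∀ᵐ ω ∂μ, ∀ᶠ i in atTop, ω ∉ {ω | i - (k - 1) ≤ countIn ρ (Set.Ici t) i ω} :=
    ae_eventually_notMem <| ne_top_of_le_ne_top
      (ENNReal.tsum_choose_sub_mul_pow_sub_ne_top hq (k - 1))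
      (ENNReal.tsum_le_tsum fun i => hindep.measure_le_countIn_le measurableSet_Ici hp i _)
  refine (measure_congr (eventuallyEq_univ.2 ?_)).trans measure_univ
  filter_upwards [hbad] with ω hω
  rw [← Nat.cofinite_eq_atTop, eventually_cofinite] at hω
  refine hω.subset fun i ⟨hti, hcard⟩ => ?_
  have hsplit := le_ncard_lt_add_ncard_le (x := (ρ · ω)) hti
  simp only [Set.mem_ofPred_eq, not_not, countIn, Set.mem_Ici]
  omega

/-- Infinite model of the secretary problem: items are indexed by rank
(`ρ i` is the arrival time of the item of rank `i`, lower rank meaning better merit),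
with i.i.d. uniform `[0,1]` arrival times.  The item of rank `i` is a `k`-potential if
exactly `k-1` indices `j < i` satisfy `ρ j < ρ i`.  For every `k ≥ 1` and `t ∈ (0,1]`,
with probability 1 only finitely many `k`-potentials arrive in `[t,1]`. -/
theorem finitely_many_potentials_after_t
    {Ω : Type*} [MeasurableSpace Ω] (μ : Measure Ω) [IsProbabilityMeasure μ]
    (ρ : ℕ → Ω → ℝ) (hmeas : ∀ i, Measurable (ρ i))
    (hindep : iIndepFun ρ μ)
    (hunif : ∀ i, Measure.map (ρ i) μ = volume.restrict (Set.Icc (0 : ℝ) 1))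
    (k : ℕ) (hk : 1 ≤ k) (t : ℝ) (ht : t ∈ Set.Ioc (0 : ℝ) 1) :
    μ {ω | {i : ℕ | t ≤ ρ i ω ∧ {j : ℕ | j < i ∧ ρ j ω < ρ i ω}.ncard = k - 1}.Finite} = 1 :=
  finitely_many_potentials_after_t_general μ ρ hmeas hindep hunif k t ht
end

section
/- Let b > 0 and c be real numbers, let N be a positive integer, let g : (0,b] → ℝ be continuous, and let γ : (0,b] → ℝ be continuously differentiable. Define f(x) := x^{N−1} · [ (b·γ(b) − c)/b^N − ∫_x^b (d/dy)(y·γ(y)) / y^N dy + N·∫_x^b g(y)/y^N dy ] for x ∈ (0,b]. Then f is continuous on (0,b] and satisfies f(x) + (N/x)·∫_x^b [f(y) − g(y)] dy + c/x = γ(x) for all x ∈ (0,b]. -/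
/-!
Write `f x = x ^ (N - 1) * V x`, where `V = volterraFactor` is the bracket. Differentiating,
`(x ^ N * V x)' = N * (f x - g x) + (x * γ x)'` on `(0, b)`, so
`x ^ N * V x - x * γ x + N * ∫_x^b (f - g)` is constant on `(0, b]`; its value at `b` is `-c`.
Dividing by `x` gives the integral equation.
-/

open MeasureTheory intervalIntegral Set

section Primitive

variable {a b : ℝ}

theorem continuousOn_Ioc_of_forall_continuousOn_Icc {E : Type*} [TopologicalSpace E]
    {F : ℝ → E} (hF : ∀ x ∈ Ioo a b, ContinuousOn F (Icc x b)) :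
    ContinuousOn F (Ioc a b) := by
  intro t ht
  have hx : (a + t) / 2 ∈ Ioo a b := ⟨by linarith [ht.1], by linarith [ht.1, ht.2]⟩
  refine (hF _ hx t ⟨by linarith [ht.1], ht.2⟩).mono_of_mem_nhdsWithin ?_
  refine mem_nhdsWithin.mpr ⟨Ioi ((a + t) / 2), isOpen_Ioi, mem_Ioi.mpr (by linarith [ht.1]), ?_⟩
  exact fun y hy => ⟨hy.1.le, hy.2.2⟩

variable {h : ℝ → ℝ}

theorem continuousOn_integral_left_of_continuousOn_Ioc (hh : ContinuousOn h (Ioc a b)) :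
    ContinuousOn (fun t => ∫ y in t..b, h y) (Ioc a b) := by
  refine continuousOn_Ioc_of_forall_continuousOn_Icc fun x hx => ?_
  have hsub : uIcc x b ⊆ Ioc a b := by
    rw [uIcc_of_le hx.2.le]
    exact Icc_subset_Ioc hx.1 le_rfl
  have := continuousOn_primitive_interval_left (μ := volume)
    ((hh.mono hsub).integrableOn_compact isCompact_uIcc)
  rwa [uIcc_of_le hx.2.le] at this

theorem hasDerivAt_integral_left_of_continuousOn_Ioc (hh : ContinuousOn h (Ioc a b))
    {t : ℝ} (ht : t ∈ Ioo a b) :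
    HasDerivAt (fun u => ∫ y in u..b, h y) (-h t) t := by
  have hsub : uIcc t b ⊆ Ioc a b := by
    rw [uIcc_of_le ht.2.le]
    exact Icc_subset_Ioc ht.1 le_rfl
  have hopen : ContinuousOn h (Ioo a b) := hh.mono Ioo_subset_Ioc_self
  exact integral_hasDerivAt_left (hh.mono hsub).intervalIntegrable
    (hopen.stronglyMeasurableAtFilter isOpen_Ioo t ht) (hopen.continuousAt (isOpen_Ioo.mem_nhds ht))

theorem eq_right_of_continuousOn_Ioc_of_hasDerivAt_zero {φ : ℝ → ℝ}
    (hφ : ContinuousOn φ (Ioc a b)) (hφ' : ∀ t ∈ Ioo a b, HasDerivAt φ 0 t) {x : ℝ}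
    (hx : x ∈ Ioc a b) : φ x = φ b :=
  (constant_of_has_deriv_right_zero (hφ.mono (Icc_subset_Ioc hx.1 le_rfl))
    (fun t ht => (hφ' t ⟨hx.1.trans_le ht.1, ht.2⟩).hasDerivWithinAt) b
    (right_mem_Icc.mpr hx.2)).symm

end Primitive

theorem continuousOn_div_pow_of_continuousOn_Ioc {b : ℝ} {h : ℝ → ℝ}
    (hh : ContinuousOn h (Ioc 0 b)) (N : ℕ) :
    ContinuousOn (fun y => h y / y ^ N) (Ioc 0 b) :=
  hh.div (continuousOn_id.pow N) fun _ hy => pow_ne_zero _ hy.1.ne'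

theorem continuousOn_add_id_mul_div_pow {b : ℝ} {γ γ' : ℝ → ℝ}
    (hγ : ∀ y ∈ Ioc (0 : ℝ) b, HasDerivAt γ (γ' y) y) (hγ' : ContinuousOn γ' (Ioc 0 b)) (N : ℕ) :
    ContinuousOn (fun y => (γ y + y * γ' y) / y ^ N) (Ioc 0 b) := by
  have hγc : ContinuousOn γ (Ioc 0 b) := fun y hy => (hγ y hy).continuousAt.continuousWithinAt
  exact continuousOn_div_pow_of_continuousOn_Ioc (hγc.add (continuousOn_id.mul hγ')) N

section VolterraFactor

variable (b c : ℝ) (N : ℕ) (g γ γ' : ℝ → ℝ)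

noncomputable def volterraFactor (x : ℝ) : ℝ :=
  (b * γ b - c) / b ^ N - (∫ y in x..b, (γ y + y * γ' y) / y ^ N) + N * ∫ y in x..b, g y / y ^ N

variable {b c N g γ γ'}

theorem continuousOn_volterraFactor (hg : ContinuousOn g (Ioc 0 b))
    (hγ : ∀ y ∈ Ioc (0 : ℝ) b, HasDerivAt γ (γ' y) y) (hγ' : ContinuousOn γ' (Ioc 0 b)) :
    ContinuousOn (volterraFactor b c N g γ γ') (Ioc 0 b) :=
  (continuousOn_const.sub (continuousOn_integral_left_of_continuousOn_Ioc
    (continuousOn_add_id_mul_div_pow hγ hγ' N))).add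
    (continuousOn_const.mul (continuousOn_integral_left_of_continuousOn_Ioc
      (continuousOn_div_pow_of_continuousOn_Ioc hg N)))

theorem hasDerivAt_volterraFactor (hg : ContinuousOn g (Ioc 0 b))
    (hγ : ∀ y ∈ Ioc (0 : ℝ) b, HasDerivAt γ (γ' y) y) (hγ' : ContinuousOn γ' (Ioc 0 b))
    {t : ℝ} (ht : t ∈ Ioo 0 b) :
    HasDerivAt (volterraFactor b c N g γ γ') ((γ t + t * γ' t) / t ^ N - N * (g t / t ^ N)) t := by
  have h : HasDerivAt (volterraFactor b c N g γ γ')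
      (0 - -((γ t + t * γ' t) / t ^ N) + N * -(g t / t ^ N)) t :=
    ((hasDerivAt_const t _).sub (hasDerivAt_integral_left_of_continuousOn_Ioc
      (continuousOn_add_id_mul_div_pow hγ hγ' N) ht)).add
      ((hasDerivAt_integral_left_of_continuousOn_Ioc
        (continuousOn_div_pow_of_continuousOn_Ioc hg N) ht).const_mul (N : ℝ))
  exact h.congr_deriv (by ring)

theorem volterraFactor_right (hb : b ≠ 0) :
    b ^ N * volterraFactor b c N g γ γ' b = b * γ b - c := by
  simp only [volterraFactor, integral_same, sub_zero, mul_zero, add_zero]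
  field_simp

end VolterraFactor

section Solution

variable {b c : ℝ} {N : ℕ} {g γ γ' f : ℝ → ℝ}

theorem continuousOn_of_eqOn_pow_mul_volterraFactor (hg : ContinuousOn g (Ioc 0 b))
    (hγ : ∀ y ∈ Ioc (0 : ℝ) b, HasDerivAt γ (γ' y) y) (hγ' : ContinuousOn γ' (Ioc 0 b))
    (hf : EqOn f (fun x => x ^ (N - 1) * volterraFactor b c N g γ γ' x) (Ioc 0 b)) :
    ContinuousOn f (Ioc 0 b) :=
  ((continuousOn_id.pow _).mul (continuousOn_volterraFactor hg hγ hγ')).congr hf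

theorem pow_mul_volterraFactor_add_integral (hg : ContinuousOn g (Ioc 0 b))
    (hγ : ∀ y ∈ Ioc (0 : ℝ) b, HasDerivAt γ (γ' y) y) (hγ' : ContinuousOn γ' (Ioc 0 b))
    (hf : EqOn f (fun x => x ^ (N - 1) * volterraFactor b c N g γ γ' x) (Ioc 0 b))
    {x : ℝ} (hx : x ∈ Ioc 0 b) :
    x ^ N * volterraFactor b c N g γ γ' x - x * γ x + N * ∫ y in x..b, (f y - g y) = -c := by
  have hfg : ContinuousOn (fun y => f y - g y) (Ioc 0 b) :=
    (continuousOn_of_eqOn_pow_mul_volterraFactor hg hγ hγ' hf).sub hg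
  set φ : ℝ → ℝ := fun z =>
    z ^ N * volterraFactor b c N g γ γ' z - z * γ z + N * ∫ y in z..b, (f y - g y) with hφ
  have hφc : ContinuousOn φ (Ioc 0 b) :=
    (((continuousOn_id.pow N).mul (continuousOn_volterraFactor hg hγ hγ')).sub
      (continuousOn_id.mul fun y hy => (hγ y hy).continuousAt.continuousWithinAt)).add
      (continuousOn_const.mul (continuousOn_integral_left_of_continuousOn_Ioc hfg))
  have hφ' : ∀ t ∈ Ioo 0 b, HasDerivAt φ 0 t := by
    intro t ht
    have h := (((hasDerivAt_pow N t).mul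
      (hasDerivAt_volterraFactor (c := c) (N := N) hg hγ hγ' ht)).sub
      ((hasDerivAt_id' t).mul (hγ t (Ioo_subset_Ioc_self ht)))).add
      ((hasDerivAt_integral_left_of_continuousOn_Ioc hfg ht).const_mul (N : ℝ))
    refine h.congr_deriv ?_
    have htN : t ^ N ≠ 0 := pow_ne_zero _ ht.1.ne'
    rw [hf (Ioo_subset_Ioc_self ht)]
    field_simp
    ring
  have hφb : φ b = -c := by
    rw [hφ]
    simp only [integral_same, mul_zero, add_zero, volterraFactor_right (hx.1.trans_le hx.2).ne']
    ring
  rw [← hφb]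
  exact eq_right_of_continuousOn_Ioc_of_hasDerivAt_zero hφc hφ' hx

end Solution

theorem volterra_explicit_solution_general
    (b c : ℝ) (N : ℕ) (hN : 1 ≤ N)
    (g γ γ' : ℝ → ℝ)
    (hg : ContinuousOn g (Set.Ioc 0 b))
    (hγ : ∀ y ∈ Set.Ioc (0 : ℝ) b, HasDerivAt γ (γ' y) y)
    (hγ' : ContinuousOn γ' (Set.Ioc 0 b))
    (f : ℝ → ℝ)
    (hf : ∀ x ∈ Set.Ioc (0 : ℝ) b,
      f x = x ^ (N - 1) *
        ((b * γ b - c) / b ^ N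
          - (∫ y in x..b, (γ y + y * γ' y) / y ^ N)
          + N * ∫ y in x..b, g y / y ^ N)) :
    ContinuousOn f (Set.Ioc 0 b) ∧
      ∀ x ∈ Set.Ioc (0 : ℝ) b,
        f x + (N / x) * (∫ y in x..b, (f y - g y)) + c / x = γ x := by
  have hf' : EqOn f (fun x => x ^ (N - 1) * volterraFactor b c N g γ γ' x) (Ioc 0 b) := hf
  refine ⟨continuousOn_of_eqOn_pow_mul_volterraFactor hg hγ hγ' hf', fun x hx => ?_⟩
  have hxN : x ^ N = x ^ (N - 1) * x := by rw [← pow_succ, Nat.sub_add_cancel hN]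
  have key := pow_mul_volterraFactor_add_integral hg hγ hγ' hf' hx
  have hx0 : x ≠ 0 := hx.1.ne'
  rw [hf' hx]
  field_simp
  linear_combination key - volterraFactor b c N g γ γ' x * hxN

/-- Explicit solution of the Volterra-type integral equation
`f x + (N/x) ∫_x^b (f y - g y) dy + c/x = γ x` on `(0,b]`,
where `g` is continuous on `(0,b]` and `γ` is continuously differentiable on `(0,b]`
(with derivative `γ'`).  The function
`f x = x^(N-1) [ (bγ(b) - c)/b^N - ∫_x^b ((yγ(y))')/y^N dy + N ∫_x^b g(y)/y^N dy ]`
is continuous on `(0,b]` and satisfies the equation there. -/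
theorem volterra_explicit_solution
    (b c : ℝ) (hb : 0 < b) (N : ℕ) (hN : 1 ≤ N)
    (g γ γ' : ℝ → ℝ)
    (hg : ContinuousOn g (Set.Ioc 0 b))
    (hγ : ∀ y ∈ Set.Ioc (0 : ℝ) b, HasDerivAt γ (γ' y) y)
    (hγ' : ContinuousOn γ' (Set.Ioc 0 b))
    (f : ℝ → ℝ)
    (hf : ∀ x ∈ Set.Ioc (0 : ℝ) b,
      f x = x ^ (N - 1) *
        ((b * γ b - c) / b ^ N
          - (∫ y in x..b, (γ y + y * γ' y) / y ^ N)
          + N * ∫ y in x..b, g y / y ^ N)) :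
    ContinuousOn f (Set.Ioc 0 b) ∧
      ∀ x ∈ Set.Ioc (0 : ℝ) b,
        f x + (N / x) * (∫ y in x..b, (f y - g y)) + c / x = γ x :=
  volterra_explicit_solution_general b c N hN g γ γ' hg hγ hγ' f hf
end

section
/- Let K > 1 be an integer and for k ∈ {1,...,K} define α_k(x) := x^{k−1} · ∑_{ℓ=k}^{K} C(ℓ−1, k−1)·(1−x)^{ℓ−k}, where C denotes the binomial coefficient. Then for every k ∈ {1,...,K} and every x ∈ (0,1), the derivative of x ↦ x·α_k(x) at x is strictly positive. -/
/-!
With `k = j + 1` and `K = k + d`, `x * α_k x = ∑_{i ≤ d} C(j+i, j) x^k (1-x)^i` is the probability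
that the `k`-th success in independent Bernoulli(`x`) trials occurs by trial `K`, i.e.
`P(Bin(K, x) ≥ k)`. Its derivative is `k C(K, k) x^(k-1) (1-x)^(K-k)`, which is positive on
`(0, 1)`; the derivative formula follows by induction on `d` from the absorption identities for
binomial coefficients.
-/

open Finset

theorem hasDerivAt_sum_range_choose_mul_pow_mul_one_sub_pow {𝕜 : Type*}
    [NontriviallyNormedField 𝕜] (j d : ℕ) (x : 𝕜) :
    HasDerivAt
      (fun y : 𝕜 => ∑ i ∈ range (d + 1), ((j + i).choose j : 𝕜) * (y ^ (j + 1) * (1 - y) ^ i))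
      ((j + 1) * (j + 1 + d).choose (j + 1) * x ^ j * (1 - x) ^ d) x := by
  induction d with
  | zero => simpa using hasDerivAt_pow (j + 1) x
  | succ d ih =>
    have hterm : HasDerivAt
        (fun y : 𝕜 => ((j + (d + 1)).choose j : 𝕜) * (y ^ (j + 1) * (1 - y) ^ (d + 1)))
        ((j + (d + 1)).choose j * ((j + 1) * x ^ j * (1 - x) ^ (d + 1)
          + x ^ (j + 1) * ((d + 1) * (1 - x) ^ d * -1))) x := by
      have h := (hasDerivAt_pow (j + 1) x).mul (((hasDerivAt_id x).const_sub 1).pow (d + 1))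
      simpa using h.const_mul ((j + (d + 1)).choose j : 𝕜)
    have hchoose₁ : (j + 1 + d).choose (j + 1) * (j + 1) = (j + (d + 1)).choose j * (d + 1) := by
      rw [show j + 1 + d = j + (d + 1) by omega]
      simpa using Nat.choose_succ_right_eq (j + (d + 1)) j
    have hchoose₂ : (j + 1 + (d + 1)).choose (j + 1) * (j + 1) =
        (j + (d + 1) + 1) * (j + (d + 1)).choose j := by
      rw [show j + 1 + (d + 1) = j + (d + 1) + 1 by omega]
      exact (Nat.add_one_mul_choose_eq _ _).symm
    have h₁ := congrArg (Nat.cast : ℕ → 𝕜) hchoose₁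
    have h₂ := congrArg (Nat.cast : ℕ → 𝕜) hchoose₂
    push_cast at h₁ h₂
    simp_rw [sum_range_succ _ (d + 1)]
    refine (ih.add hterm).congr_deriv ?_
    linear_combination x ^ j * (1 - x) ^ d * (h₁ - (1 - x) * h₂)

theorem mul_pow_mul_sum_Icc_eq_sum_range {R : Type*} [CommRing R] (j d : ℕ) (y : R) :
    y * (y ^ j * ∑ ℓ ∈ Icc (j + 1) (j + 1 + d), ((ℓ - 1).choose j : R) * (1 - y) ^ (ℓ - (j + 1)))
      =
      ∑ i ∈ range (d + 1), ((j + i).choose j : R) * (y ^ (j + 1) * (1 - y) ^ i) := by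
  rw [← Ico_add_one_right_eq_Icc, sum_Ico_eq_sum_range,
    show j + 1 + d + 1 - (j + 1) = d + 1 by omega, mul_sum, mul_sum]
  refine sum_congr rfl fun i _ => ?_
  rw [show j + 1 + i - 1 = j + i by omega, Nat.add_sub_cancel_left]
  ring

theorem deriv_x_mul_alpha_pos_general
    (K : ℕ) (α : ℕ → ℝ → ℝ)
    (hα : ∀ k ∈ Finset.Icc 1 K, ∀ x : ℝ,
      α k x = x ^ (k - 1) *
        ∑ ℓ ∈ Finset.Icc k K, ((ℓ - 1).choose (k - 1) : ℝ) * (1 - x) ^ (ℓ - k)) :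
    ∀ k ∈ Finset.Icc 1 K, ∀ x ∈ Set.Ioo (0 : ℝ) 1,
      0 < deriv (fun y : ℝ => y * α k y) x := by
  intro k hk x ⟨hx₀, hx₁⟩
  obtain ⟨hk₁, hkK⟩ := mem_Icc.mp hk
  obtain ⟨j, rfl⟩ : ∃ j, k = j + 1 := ⟨k - 1, by omega⟩
  obtain ⟨d, rfl⟩ : ∃ d, K = j + 1 + d := ⟨K - (j + 1), by omega⟩
  have hfun : (fun y : ℝ => y * α (j + 1) y) =
      fun y => ∑ i ∈ range (d + 1), ((j + i).choose j : ℝ) * (y ^ (j + 1) * (1 - y) ^ i) := by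
    funext y
    rw [hα _ hk, Nat.add_sub_cancel, mul_pow_mul_sum_Icc_eq_sum_range]
  rw [hfun, (hasDerivAt_sum_range_choose_mul_pow_mul_one_sub_pow j d x).deriv]
  have hchoose : (0 : ℝ) < (j + 1 + d).choose (j + 1) := mod_cast Nat.choose_pos (by omega)
  have hpow : 0 < (1 - x) ^ d := pow_pos (sub_pos.mpr hx₁) d
  positivity

/-- For `K > 1` and `α_k(x) = x^(k-1) ∑_{ℓ=k}^K C(ℓ-1,k-1) (1-x)^(ℓ-k)`,
the derivative of `x ↦ x * α_k x` is strictly positive on `(0,1)`, for every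
`k ∈ {1,…,K}`. -/
theorem deriv_x_mul_alpha_pos
    (K : ℕ) (hK : 1 < K) (α : ℕ → ℝ → ℝ)
    (hα : ∀ k ∈ Finset.Icc 1 K, ∀ x : ℝ,
      α k x = x ^ (k - 1) *
        ∑ ℓ ∈ Finset.Icc k K, ((ℓ - 1).choose (k - 1) : ℝ) * (1 - x) ^ (ℓ - k)) :
    ∀ k ∈ Finset.Icc 1 K, ∀ x ∈ Set.Ioo (0 : ℝ) 1,
      0 < deriv (fun y : ℝ => y * α k y) x :=
  deriv_x_mul_alpha_pos_general K α hα
end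

section
/- Let K > 1 be an integer and for k ∈ {1,...,K} define α_k(x) := x^{k−1} · ∑_{ℓ=k}^{K} C(ℓ−1, k−1)·(1−x)^{ℓ−k}, where C denotes the binomial coefficient. Then for every k with 1 ≤ k < K and every x ∈ (0,1), α_k(x) > α_{k+1}(x). -/
/-!
In fact `α_k(x) - α_{k+1}(x) = C(K, k) x^(k-1) (1-x)^(K-k)`: after factoring out `x^(k-1)` and
reindexing both sums from `0`, Pascal's rule `C(m+k, k) = C(m+k-1, k-1) + C(m+k-1, k)` makes the
difference of the two sums telescope in the number of summands.
-/

open Finset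

theorem sum_range_succ_choose_mul_pow_sub {R : Type*} [CommRing R] (j n : ℕ) (y : R) :
    ∑ m ∈ range (n + 1), ((m + j).choose j : R) * y ^ m
      - (1 - y) * ∑ m ∈ range n, ((m + (j + 1)).choose (j + 1) : R) * y ^ m
      = ((n + (j + 1)).choose (j + 1) : R) * y ^ n := by
  induction n with
  | zero => simp
  | succ n ih =>
    have pascal : ((n + 1 + (j + 1)).choose (j + 1) : R)
        = ((n + 1 + j).choose j : R) + ((n + (j + 1)).choose (j + 1) : R) := by
      rw [show n + 1 + (j + 1) = (n + j + 1) + 1 by omega, Nat.choose_succ_succ',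
        show n + 1 + j = n + j + 1 by omega, show n + (j + 1) = n + j + 1 by omega]
      exact Nat.cast_add _ _
    rw [sum_range_succ _ (n + 1),
      sum_range_succ (fun m => ((m + (j + 1)).choose (j + 1) : R) * y ^ m) n, pascal]
    linear_combination ih

theorem sum_Icc_choose_mul_pow_eq_sum_range {R : Type*} [Semiring R] (j K : ℕ) (y : R) :
    ∑ ℓ ∈ Icc (j + 1) K, ((ℓ - 1).choose (j + 1 - 1) : R) * y ^ (ℓ - (j + 1))
      = ∑ m ∈ range (K - j), ((m + j).choose j : R) * y ^ m := by
  rw [← Ico_add_one_right_eq_Icc, sum_Ico_eq_sum_range,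
    show K + 1 - (j + 1) = K - j by omega]
  refine sum_congr rfl fun m _ => ?_
  rw [show j + 1 + m - 1 = m + j by omega, Nat.add_sub_cancel, Nat.add_sub_cancel_left]

theorem alpha_strict_anti_general
    (K : ℕ) (α : ℕ → ℝ → ℝ)
    (hα : ∀ k ∈ Finset.Icc 1 K, ∀ x : ℝ,
      α k x = x ^ (k - 1) *
        ∑ ℓ ∈ Finset.Icc k K, ((ℓ - 1).choose (k - 1) : ℝ) * (1 - x) ^ (ℓ - k)) :
    ∀ k : ℕ, 1 ≤ k → k < K → ∀ x ∈ Set.Ioo (0 : ℝ) 1,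
      α (k + 1) x < α k x := by
  intro k hk hkK x ⟨hx0, hx1⟩
  obtain ⟨j, rfl⟩ := Nat.exists_eq_add_of_le' hk
  obtain ⟨n, hn⟩ : ∃ n, K - j = n + 1 ∧ K - (j + 1) = n := ⟨K - (j + 1), by omega, rfl⟩
  rw [hα (j + 1) (mem_Icc.2 ⟨by omega, by omega⟩),
    hα (j + 1 + 1) (mem_Icc.2 ⟨by omega, by omega⟩),
    sum_Icc_choose_mul_pow_eq_sum_range, sum_Icc_choose_mul_pow_eq_sum_range, hn.1, hn.2,
    Nat.add_sub_cancel, Nat.add_sub_cancel]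
  have telescope := sum_range_succ_choose_mul_pow_sub j n (1 - x)
  rw [sub_sub_cancel] at telescope
  have tail_pos : (0 : ℝ) < ((n + (j + 1)).choose (j + 1) : ℝ) * (1 - x) ^ n :=
    mul_pos (mod_cast Nat.choose_pos (by omega)) (pow_pos (by linarith) n)
  rw [pow_succ, mul_assoc]
  exact mul_lt_mul_of_pos_left (by linarith) (pow_pos hx0 j)

/-- For `K > 1` and `α_k(x) = x^(k-1) ∑_{ℓ=k}^K C(ℓ-1,k-1) (1-x)^(ℓ-k)`,
we have `α_k(x) > α_(k+1)(x)` for every `1 ≤ k < K` and `x ∈ (0,1)`. -/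
theorem alpha_strict_anti
    (K : ℕ) (hK : 1 < K) (α : ℕ → ℝ → ℝ)
    (hα : ∀ k ∈ Finset.Icc 1 K, ∀ x : ℝ,
      α k x = x ^ (k - 1) *
        ∑ ℓ ∈ Finset.Icc k K, ((ℓ - 1).choose (k - 1) : ℝ) * (1 - x) ^ (ℓ - k)) :
    ∀ k : ℕ, 1 ≤ k → k < K → ∀ x ∈ Set.Ioo (0 : ℝ) 1,
      α (k + 1) x < α k x :=
  alpha_strict_anti_general K α hα
end

section
/- Let K > 1 be an integer and for k ∈ {1,...,K} define β_k(x) := ∑_{ℓ=k}^{K} C(ℓ−1, k−1)·(1−x)^{ℓ−k}, where C denotes the binomial coefficient. Then for every k with 1 ≤ k < K and every x ∈ (0,1), β_k(x) > x·β_{k+1}(x). -/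
/-!
With `y = 1 - x`, Pascal's rule gives the telescoping identity
`β_k = (1 - y) β_{k+1} + C(K, k) y^(K-k)`, so `β_k(x) - x β_{k+1}(x) = C(K, k) (1 - x)^(K-k) > 0`.
-/

open Finset

/-- `β_k` as a polynomial in `y = 1 - x`. -/
def betaSum {R : Type*} [CommRing R] (K k : ℕ) (y : R) : R :=
  ∑ ℓ ∈ Icc k K, ((ℓ - 1).choose (k - 1) : R) * y ^ (ℓ - k)

section

variable {R : Type*} [CommRing R] {K k : ℕ}

theorem betaSum_self (y : R) : betaSum k k y = 1 := by
  simp [betaSum]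

theorem betaSum_of_lt (h : K < k) (y : R) : betaSum K k y = 0 := by
  simp [betaSum, Icc_eq_empty_of_lt h]

theorem betaSum_succ_right (h : k ≤ K + 1) (y : R) :
    betaSum (K + 1) k y = betaSum K k y + (K.choose (k - 1) : R) * y ^ (K + 1 - k) := by
  rw [betaSum, sum_Icc_succ_top h, ← betaSum, Nat.add_sub_cancel]

theorem betaSum_eq_sub_mul_betaSum_succ_add (hk : 1 ≤ k) (hkK : k ≤ K) (y : R) :
    betaSum K k y = (1 - y) * betaSum K (k + 1) y + (K.choose k : R) * y ^ (K - k) := by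
  induction K, hkK using Nat.le_induction with
  | base => simp [betaSum_self, betaSum_of_lt (Nat.lt_succ_self k)]
  | succ K hkK ih =>
    obtain ⟨j, rfl⟩ : ∃ j, k = j + 1 := ⟨k - 1, by omega⟩
    have hexp : K + 1 - (j + 1) = K - (j + 1) + 1 := by omega
    rw [betaSum_succ_right (by omega), betaSum_succ_right (by omega), ih, Nat.choose_succ_succ,
      hexp, Nat.add_sub_cancel, Nat.add_sub_cancel, Nat.add_sub_add_right]
    push_cast
    ring

end

theorem beta_gt_x_mul_beta_succ_general
    (K : ℕ) (β : ℕ → ℝ → ℝ)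
    (hβ : ∀ k ∈ Finset.Icc 1 K, ∀ x : ℝ,
      β k x = ∑ ℓ ∈ Finset.Icc k K, ((ℓ - 1).choose (k - 1) : ℝ) * (1 - x) ^ (ℓ - k)) :
    ∀ k : ℕ, 1 ≤ k → k < K → ∀ x ∈ Set.Ioo (0 : ℝ) 1,
      x * β (k + 1) x < β k x := by
  intro k hk hkK x ⟨hx0, hx1⟩
  rw [hβ k (mem_Icc.2 ⟨hk, hkK.le⟩), hβ (k + 1) (mem_Icc.2 ⟨by omega, hkK⟩)]
  change x * betaSum K (k + 1) (1 - x) < betaSum K k (1 - x)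
  have hrem : 0 < (K.choose k : ℝ) * (1 - x) ^ (K - k) :=
    mul_pos (by exact_mod_cast Nat.choose_pos hkK.le) (pow_pos (by linarith) _)
  rw [betaSum_eq_sub_mul_betaSum_succ_add hk hkK.le, sub_sub_cancel]
  linarith

/-- For `K > 1` and `β_k(x) = ∑_{ℓ=k}^K C(ℓ-1,k-1) (1-x)^(ℓ-k)`,
we have `β_k(x) > x * β_(k+1)(x)` for every `1 ≤ k < K` and `x ∈ (0,1)`. -/
theorem beta_gt_x_mul_beta_succ
    (K : ℕ) (hK : 1 < K) (β : ℕ → ℝ → ℝ)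
    (hβ : ∀ k ∈ Finset.Icc 1 K, ∀ x : ℝ,
      β k x = ∑ ℓ ∈ Finset.Icc k K, ((ℓ - 1).choose (k - 1) : ℝ) * (1 - x) ^ (ℓ - k)) :
    ∀ k : ℕ, 1 ≤ k → k < K → ∀ x ∈ Set.Ioo (0 : ℝ) 1,
      x * β (k + 1) x < β k x :=
  beta_gt_x_mul_beta_succ_general K β hβ
end

section
/- Let J ≥ 1 be an integer. Suppose p_1,...,p_J : [0,1] → ℝ are integrable functions with y ↦ p_j(y)/y integrable on (0,1], satisfying for all x ∈ [0,1]: p_j(x) ≥ 0 for all j; p_j(x) ≤ ∫_0^x (1/y)·[p_{j+1}(y) − p_j(y)] dy for 1 ≤ j < J; and p_J(x) ≤ 1 − ∫_0^x p_J(y)/y dy. Suppose q_1,...,q_J : [0,1] → ℝ are integrable functions satisfying for all x ∈ (0,1]: q_j(x) ≥ 0 for all j; q_1(x) + (1/x)·∫_x^1 q_1(y) dy ≥ 1; and q_j(x) + (1/x)·∫_x^1 [q_j(y) − q_{j−1}(y)] dy ≥ 1 for 1 < j ≤ J. Then ∑_{j=1}^J ∫_0^1 p_j(x) dx ≤ ∫_0^1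 q_J(x) dx. -/
open MeasureTheory intervalIntegral

/-! Multiply the dual constraint for `q_j` by `p_j(x) ≥ 0` and sum over `j`. Fubini on the
triangle `{x < y}` turns the cross terms `∫ p_j(x)/x · ∫_x^1 Δq_j` into `∫ F_j Δq_j`, where
`F_j(x) = ∫_0^x p_j(y)/y dy` and `Δq_j = q_j - q_{j-1}` with `q_0 = 0`. The primal constraints
read `p_j + F_j ≤ F_{j+1}` and `p_J + F_J ≤ 1`, so `∑_j (p_j q_j + F_j Δq_j)` telescopes to at
most `q_J`, pointwise. -/

section TriangleFubini

open Set

variable {a b : ℝ} {f g : ℝ → ℝ}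

theorem integrable_indicator_lt_mul (hf : IntegrableOn f (Ioc a b))
    (hg : IntegrableOn g (Ioc a b)) :
    Integrable ({z : ℝ × ℝ | z.1 < z.2}.indicator fun z => f z.1 * g z.2)
      ((volume.restrict (Ioc a b)).prod (volume.restrict (Ioc a b))) :=
  (hf.mul_prod hg).indicator (measurableSet_lt measurable_fst measurable_snd)

theorem integral_indicator_lt_mul_left {x : ℝ} (hx : x ∈ Ioc a b) :
    ∫ y in Ioc a b, {z : ℝ × ℝ | z.1 < z.2}.indicator (fun z => f z.1 * g z.2) (x, y)
      = f x * ∫ y in x..b, g y := by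
  have hsec : (fun y => {z : ℝ × ℝ | z.1 < z.2}.indicator (fun z => f z.1 * g z.2) (x, y))
      = (Ioi x).indicator fun y => f x * g y := by
    ext y; by_cases h : x < y <;> simp [h]
  have hset : Ioi x ∩ Ioc a b = Ioc x b := by
    ext y; simp only [mem_inter_iff, mem_Ioi, mem_Ioc]
    constructor
    · rintro ⟨h1, -, h2⟩; exact ⟨h1, h2⟩
    · rintro ⟨h1, h2⟩; exact ⟨h1, hx.1.trans h1, h2⟩
  rw [hsec, MeasureTheory.integral_indicator measurableSet_Ioi,
    Measure.restrict_restrict measurableSet_Ioi, hset, MeasureTheory.integral_const_mul,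
    integral_of_le hx.2]

theorem integral_indicator_lt_mul_right {y : ℝ} (hy : y ∈ Ioc a b) :
    ∫ x in Ioc a b, {z : ℝ × ℝ | z.1 < z.2}.indicator (fun z => f z.1 * g z.2) (x, y)
      = (∫ x in a..y, f x) * g y := by
  have hsec : (fun x => {z : ℝ × ℝ | z.1 < z.2}.indicator (fun z => f z.1 * g z.2) (x, y))
      = (Iio y).indicator fun x => f x * g y := by
    ext x; by_cases h : x < y <;> simp [h]
  have hset : Iio y ∩ Ioc a b = Ioo a y := by
    ext x; simp only [mem_inter_iff, mem_Iio, mem_Ioc, mem_Ioo]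
    constructor
    · rintro ⟨h1, h2, -⟩; exact ⟨h2, h1⟩
    · rintro ⟨h1, h2⟩; exact ⟨h2, h1, h2.le.trans hy.2⟩
  rw [hsec, MeasureTheory.integral_indicator measurableSet_Iio,
    Measure.restrict_restrict measurableSet_Iio, hset, MeasureTheory.integral_mul_const,
    integral_of_le hy.1.le, integral_Ioc_eq_integral_Ioo]

variable (hab : a ≤ b) (hf : IntervalIntegrable f volume a b) (hg : IntervalIntegrable g volume a b)
include hab hf hg

theorem intervalIntegrable_mul_integral_from :
    IntervalIntegrable (fun x => f x * ∫ y in x..b, g y) volume a b :=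
  (intervalIntegrable_iff_integrableOn_Ioc_of_le hab).2 <|
    IntegrableOn.congr_fun (integrable_indicator_lt_mul hf.1 hg.1).integral_prod_left
      (fun _ hx => integral_indicator_lt_mul_left hx) measurableSet_Ioc

theorem intervalIntegrable_integral_to_mul :
    IntervalIntegrable (fun y => (∫ x in a..y, f x) * g y) volume a b :=
  (intervalIntegrable_iff_integrableOn_Ioc_of_le hab).2 <|
    IntegrableOn.congr_fun (integrable_indicator_lt_mul hf.1 hg.1).integral_prod_right
      (fun _ hy => integral_indicator_lt_mul_right hy) measurableSet_Ioc

theorem integral_mul_integral_from_eq :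
    ∫ x in a..b, f x * ∫ y in x..b, g y = ∫ y in a..b, (∫ x in a..y, f x) * g y := by
  have hswap := integral_integral_swap
    (f := fun x y => {z : ℝ × ℝ | z.1 < z.2}.indicator (fun z => f z.1 * g z.2) (x, y))
    (integrable_indicator_lt_mul hf.1 hg.1)
  rw [integral_of_le hab, integral_of_le hab,
    ← setIntegral_congr_fun measurableSet_Ioc (fun _ hx => integral_indicator_lt_mul_left hx),
    ← setIntegral_congr_fun measurableSet_Ioc (fun _ hy => integral_indicator_lt_mul_right hy)]
  exact hswap

theorem intervalIntegrable_mul_integral_from_sub :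
    IntervalIntegrable (fun x => f x * (∫ y in x..b, g y) - (∫ y in a..x, f y) * g x) volume a b :=
  (intervalIntegrable_mul_integral_from hab hf hg).sub
    (intervalIntegrable_integral_to_mul hab hf hg)

theorem integral_mul_integral_from_sub_eq_zero :
    ∫ x in a..b, (f x * (∫ y in x..b, g y) - (∫ y in a..x, f y) * g x) = 0 := by
  rw [integral_sub (intervalIntegrable_mul_integral_from hab hf hg)
    (intervalIntegrable_integral_to_mul hab hf hg), integral_mul_integral_from_eq hab hf hg,
    sub_self]

end TriangleFubini

open Finset

theorem sum_mul_add_mul_sub_le {P F Q : ℕ → ℝ} {n : ℕ} (hQ0 : Q 0 = 0)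
    (hstep : ∀ k < n, Q k * (P k + F k) ≤ Q k * F (k + 1)) :
    ∑ j ∈ Icc 1 n, (P j * Q j + F j * (Q j - Q (j - 1))) ≤ Q n * (P n + F n) := by
  induction n with
  | zero => simp [hQ0]
  | succ n ih =>
    rw [sum_Icc_succ_top (by omega), Nat.add_sub_cancel]
    have := ih fun k hk => hstep k (by omega)
    linarith [hstep n n.lt_succ_self]

theorem sum_le_add_sum_of_primal_dual {J : ℕ} {P F Q G : ℕ → ℝ} {c : ℝ}
    (hP : ∀ j ∈ Icc 1 J, 0 ≤ P j) (hQ : ∀ j ∈ Icc 1 J, 0 ≤ Q j) (hQ0 : Q 0 = 0)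
    (hprimal : ∀ j, 1 ≤ j → j < J → P j + F j ≤ F (j + 1)) (hlast : P J + F J ≤ 1)
    (hdual : ∀ j ∈ Icc 1 J, 1 ≤ Q j + c * G j) :
    ∑ j ∈ Icc 1 J, P j ≤ Q J + ∑ j ∈ Icc 1 J, (P j * c * G j - F j * (Q j - Q (j - 1))) := by
  have hQ_nonneg : ∀ k ≤ J, 0 ≤ Q k := fun k hk => by
    rcases k.eq_zero_or_pos with rfl | hk0
    · exact hQ0.ge
    · exact hQ k (mem_Icc.2 ⟨hk0, hk⟩)
  have htelescope := sum_mul_add_mul_sub_le (P := P) (F := F) hQ0 fun k hk => by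
    rcases k.eq_zero_or_pos with rfl | hk0
    · simp [hQ0]
    · exact mul_le_mul_of_nonneg_left (hprimal k hk0 hk) (hQ_nonneg k hk.le)
  calc ∑ j ∈ Icc 1 J, P j
      ≤ ∑ j ∈ Icc 1 J, (P j * Q j + P j * c * G j) := sum_le_sum fun j hj => by
        nlinarith [hP j hj, hdual j hj]
    _ = ∑ j ∈ Icc 1 J, (P j * Q j + F j * (Q j - Q (j - 1)))
        + ∑ j ∈ Icc 1 J, (P j * c * G j - F j * (Q j - Q (j - 1))) := by
      rw [← sum_add_distrib]; exact sum_congr rfl fun j _ => by ring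
    _ ≤ Q J * (P J + F J) + _ := by gcongr
    _ ≤ Q J + _ := by gcongr; nlinarith [hQ_nonneg J le_rfl]

def dualIncrement (q : ℕ → ℝ → ℝ) (j : ℕ) : ℝ → ℝ :=
  Function.update q 0 0 j - Function.update q 0 0 (j - 1)

theorem intervalIntegrable_dualIncrement {q : ℕ → ℝ → ℝ} {J j : ℕ} {μ : Measure ℝ} {a b : ℝ}
    (hq : ∀ j ∈ Icc 1 J, IntervalIntegrable (q j) μ a b) (hj : j ∈ Icc 1 J) :
    IntervalIntegrable (dualIncrement q j) μ a b := by
  have hQ : ∀ k, 1 ≤ k → Function.update q 0 0 k = q k := fun k hk =>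
    Function.update_of_ne (by omega) _ _
  obtain ⟨hj1, hjJ⟩ := mem_Icc.1 hj
  refine (hQ j hj1 ▸ hq j hj).sub ?_
  rcases (j - 1).eq_zero_or_pos with h0 | h1
  · simpa [h0] using IntervalIntegrable.zero
  · exact hQ _ h1 ▸ hq _ (mem_Icc.2 ⟨h1, by omega⟩)

theorem one_le_update_add_integral_dualIncrement {q : ℕ → ℝ → ℝ} {J : ℕ} {x : ℝ}
    (hfirst : 1 ≤ q 1 x + (1 / x) * ∫ y in x..1, q 1 y)
    (hmid : ∀ j, 1 < j → j ≤ J → 1 ≤ q j x + (1 / x) * ∫ y in x..1, (q j y - q (j - 1) y))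
    {j : ℕ} (hj : j ∈ Icc 1 J) :
    1 ≤ Function.update q 0 0 j x + (1 / x) * ∫ y in x..1, dualIncrement q j y := by
  obtain ⟨hj1, hjJ⟩ := mem_Icc.1 hj
  rcases hj1.eq_or_lt with rfl | hj1
  · simpa [dualIncrement] using hfirst
  · simp only [dualIncrement, Pi.sub_apply]
    rw [Function.update_of_ne (by omega), Function.update_of_ne (by omega)]
    exact hmid j hj1 hjJ

theorem add_integral_div_le_of_le_integral_sub_div {f g : ℝ → ℝ} {x : ℝ}
    (hx : x ∈ Set.Icc (0 : ℝ) 1)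
    (hf : IntegrableOn (fun y => f y / y) (Set.Ioc 0 1))
    (hg : IntegrableOn (fun y => g y / y) (Set.Ioc 0 1))
    (h : f x ≤ ∫ y in (0 : ℝ)..x, (g y - f y) / y) :
    f x + ∫ y in (0 : ℝ)..x, f y / y ≤ ∫ y in (0 : ℝ)..x, g y / y := by
  have hIoc : Set.Ioc 0 x ⊆ Set.Ioc 0 1 := Set.Ioc_subset_Ioc_right hx.2
  simp only [sub_div] at h
  rw [integral_sub ((intervalIntegrable_iff_integrableOn_Ioc_of_le hx.1).2 (hg.mono_set hIoc))
    ((intervalIntegrable_iff_integrableOn_Ioc_of_le hx.1).2 (hf.mono_set hIoc))] at h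
  linarith

theorem sum_le_add_sum_cross_of_feasible {J : ℕ} (hJ : 1 ≤ J) {p q : ℕ → ℝ → ℝ} {x : ℝ}
    (hx : x ∈ Set.Icc (0 : ℝ) 1)
    (hp_div_int : ∀ j ∈ Icc 1 J, IntegrableOn (fun y => p j y / y) (Set.Ioc 0 1))
    (hp_nonneg : ∀ j ∈ Icc 1 J, 0 ≤ p j x)
    (hp_mid : ∀ j, 1 ≤ j → j < J → p j x ≤ ∫ y in (0 : ℝ)..x, (p (j + 1) y - p j y) / y)
    (hp_last : p J x ≤ 1 - ∫ y in (0 : ℝ)..x, p J y / y)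
    (hq_nonneg : ∀ j ∈ Icc 1 J, 0 ≤ q j x)
    (hq_first : 1 ≤ q 1 x + (1 / x) * ∫ y in x..1, q 1 y)
    (hq_mid : ∀ j, 1 < j → j ≤ J → 1 ≤ q j x + (1 / x) * ∫ y in x..1, (q j y - q (j - 1) y)) :
    ∑ j ∈ Icc 1 J, p j x ≤ q J x + ∑ j ∈ Icc 1 J,
      (p j x / x * (∫ y in x..1, dualIncrement q j y)
        - (∫ y in (0 : ℝ)..x, p j y / y) * dualIncrement q j x) := by
  have hQ : ∀ j, 1 ≤ j → Function.update q 0 0 j = q j := fun j hj =>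
    Function.update_of_ne (by omega) _ _
  have := sum_le_add_sum_of_primal_dual (P := fun j => p j x)
    (F := fun j => ∫ y in (0 : ℝ)..x, p j y / y) (Q := fun j => Function.update q 0 0 j x)
    (G := fun j => ∫ y in x..1, dualIncrement q j y) (c := 1 / x) hp_nonneg
    (fun j hj => hQ j (mem_Icc.1 hj).1 ▸ hq_nonneg j hj) (by simp)
    (fun j hj1 hjJ => add_integral_div_le_of_le_integral_sub_div hx
      (hp_div_int j (mem_Icc.2 ⟨hj1, hjJ.le⟩)) (hp_div_int (j + 1) (mem_Icc.2 ⟨by omega, hjJ⟩))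
      (hp_mid j hj1 hjJ))
    (by linarith) (fun j hj => one_le_update_add_integral_dualIncrement hq_first hq_mid hj)
  simp only [mul_one_div, hQ J hJ] at this
  exact this

/-- Weak duality between the continuous linear program `CP(J)` (primal solutions `p`)
and its dual `CD(J)` (dual solutions `q`) for the `J`-choice secretary problem in the
infinite model: the primal objective `∑_j ∫_0^1 p_j` is at most the dual objective
`∫_0^1 q_J`. -/
theorem weak_duality_CP_CD
    (J : ℕ) (hJ : 1 ≤ J) (p q : ℕ → ℝ → ℝ)
    -- integrability assumptions
    (hp_int : ∀ j ∈ Finset.Icc 1 J, IntervalIntegrable (p j) volume 0 1)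
    (hp_div_int : ∀ j ∈ Finset.Icc 1 J,
      IntegrableOn (fun y => p j y / y) (Set.Ioc (0 : ℝ) 1) volume)
    (hq_int : ∀ j ∈ Finset.Icc 1 J, IntervalIntegrable (q j) volume 0 1)
    -- primal feasibility
    (hp_nonneg : ∀ j ∈ Finset.Icc 1 J, ∀ x ∈ Set.Icc (0 : ℝ) 1, 0 ≤ p j x)
    (hp_mid : ∀ j : ℕ, 1 ≤ j → j < J → ∀ x ∈ Set.Icc (0 : ℝ) 1,
      p j x ≤ ∫ y in (0 : ℝ)..x, (p (j + 1) y - p j y) / y)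
    (hp_last : ∀ x ∈ Set.Icc (0 : ℝ) 1,
      p J x ≤ 1 - ∫ y in (0 : ℝ)..x, p J y / y)
    -- dual feasibility
    (hq_nonneg : ∀ j ∈ Finset.Icc 1 J, ∀ x ∈ Set.Ioc (0 : ℝ) 1, 0 ≤ q j x)
    (hq_first : ∀ x ∈ Set.Ioc (0 : ℝ) 1,
      1 ≤ q 1 x + (1 / x) * ∫ y in x..(1 : ℝ), q 1 y)
    (hq_mid : ∀ j : ℕ, 1 < j → j ≤ J → ∀ x ∈ Set.Ioc (0 : ℝ) 1,
      1 ≤ q j x + (1 / x) * ∫ y in x..(1 : ℝ), (q j y - q (j - 1) y)) :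
    ∑ j ∈ Finset.Icc 1 J, (∫ x in (0 : ℝ)..1, p j x) ≤ ∫ x in (0 : ℝ)..1, q J x := by
  have hp_div : ∀ j ∈ Icc 1 J, IntervalIntegrable (fun y => p j y / y) volume 0 1 := fun j hj =>
    (intervalIntegrable_iff_integrableOn_Ioc_of_le zero_le_one).2 (hp_div_int j hj)
  set cross : ℕ → ℝ → ℝ := fun j x => p j x / x * (∫ y in x..1, dualIncrement q j y)
    - (∫ y in (0 : ℝ)..x, p j y / y) * dualIncrement q j x
  have hcross_int : ∀ j ∈ Icc 1 J, IntervalIntegrable (cross j) volume 0 1 := fun j hj =>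
    intervalIntegrable_mul_integral_from_sub zero_le_one (hp_div j hj)
      (intervalIntegrable_dualIncrement hq_int hj)
  have hpointwise : ∀ x ∈ Set.Ioo (0 : ℝ) 1,
      ∑ j ∈ Icc 1 J, p j x ≤ q J x + ∑ j ∈ Icc 1 J, cross j x := fun x hx =>
    have hxIcc := Set.Ioo_subset_Icc_self hx
    have hxIoc := Set.Ioo_subset_Ioc_self hx
    sum_le_add_sum_cross_of_feasible hJ hxIcc hp_div_int (fun j hj => hp_nonneg j hj x hxIcc)
      (fun j h1 h2 => hp_mid j h1 h2 x hxIcc) (hp_last x hxIcc)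
      (fun j hj => hq_nonneg j hj x hxIoc) (hq_first x hxIoc)
      (fun j h1 h2 => hq_mid j h1 h2 x hxIoc)
  have hqJ := hq_int J (mem_Icc.2 ⟨hJ, le_rfl⟩)
  have hcross_sum := sum_fn (Icc 1 J) cross ▸ IntervalIntegrable.sum _ hcross_int
  calc ∑ j ∈ Icc 1 J, ∫ x in (0 : ℝ)..1, p j x
      = ∫ x in (0 : ℝ)..1, ∑ j ∈ Icc 1 J, p j x := (integral_finsetSum hp_int).symm
    _ ≤ ∫ x in (0 : ℝ)..1, (q J x + ∑ j ∈ Icc 1 J, cross j x) :=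
      integral_mono_on_of_le_Ioo zero_le_one
        (sum_fn (Icc 1 J) p ▸ IntervalIntegrable.sum _ hp_int) (hqJ.add hcross_sum) hpointwise
    _ = ∫ x in (0 : ℝ)..1, q J x := by
      rw [integral_add hqJ hcross_sum, integral_finsetSum hcross_int, add_eq_left]
      exact sum_eq_zero fun j hj => integral_mul_integral_from_sub_eq_zero zero_le_one
        (hp_div j hj) (intervalIntegrable_dualIncrement hq_int hj)
end

section
/- Let J, K ≥ 1 be integers and α_k(x) := x^{k−1}·∑_{ℓ=k}^{K} C(ℓ−1,k−1)(1−x)^{ℓ−k}. Suppose (p_{j|k})_{j∈[J],k∈[K]} are integrable functions on [0,1] with y ↦ p_{j|k}(y)/y integrable, satisfying for all x ∈ [0,1] and k ∈ [K]: p_{j|k}(x) ≥ 0; p_{j|k}(x) ≤ ∫_0^x (1/y)·∑_{ℓ=1}^K [p_{(j+1)|ℓ}(y) − p_{j|ℓ}(y)] dy for 1 ≤ j < J; and p_{J|k}(x) ≤ 1 − ∫_0^x (1/y)·∑_{ℓ=1}^K p_{J|ℓ}(y) dy. Suppose (q_{j|k})_{j∈[J],k∈[K]} are integrable functions satisfying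 for all x ∈ (0,1] and k ∈ [K]: q_{j|k}(x) ≥ 0; q_{1|k}(x) + (1/x)·∫_x^1 ∑_{ℓ=1}^K q_{1|ℓ}(y) dy ≥ α_k(x); and q_{j|k}(x) + (1/x)·∫_x^1 ∑_{ℓ=1}^K [q_{j|ℓ}(y) − q_{(j−1)|ℓ}(y)] dy ≥ α_k(x) for 1 < j ≤ J. Then ∑_{j=1}^J ∑_{k=1}^K ∫_0^1 α_k(x)·p_{j|k}(x) dx ≤ ∑_{k=1}^K ∫_0^1 q_{J|k}(x) dx. -/
/-!
Write `P_j = ∑_ℓ p_{j|ℓ}`, `Q_j = ∑_ℓ q_{j|ℓ}` with `Q_0 = 0`, and `S_j(x) = ∫_0^x P_j(y)/y dy`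
with `S_{J+1} = 1`, so that the primal constraints read `p_{j|k} ≤ S_{j+1} - S_j`. Multiplying the
dual constraint of level `j` by `p_{j|k} ≥ 0` and the primal one by `q_{j|k} ≥ 0` gives
`α_k p_{j|k} ≤ q_{j|k} (S_{j+1} - S_j) + (p_{j|k}(x)/x) ∫_x^1 (Q_j - Q_{j-1})`. Summing over `k`,
integrating over `[0, 1]` and exchanging the order of integration on the triangle `x < y` in the
last term bounds the level-`j` objective by `T_{j+1} - T_j`, where `T_j = ∫_0^1 Q_{j-1} S_j`.
The sum over `j` telescopes to `T_{J+1} - T_1 = ∫_0^1 Q_J`.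
-/

open MeasureTheory intervalIntegral Set

theorem setIntegral_Ioc_integral_Ioc_mul_swap {f g : ℝ → ℝ} {a b : ℝ}
    (hf : IntegrableOn f (Ioc a b)) (hg : IntegrableOn g (Ioc a b)) :
    ∫ x in Ioc a b, (∫ y in Ioc x b, g y) * f x = ∫ y in Ioc a b, g y * ∫ x in Ioc a y, f x := by
  let F : ℝ → ℝ → ℝ := fun x y =>
    {z : ℝ × ℝ | z.1 < z.2}.indicator (fun z => f z.1 * g z.2) (x, y)
  have hF : Integrable (Function.uncurry F)
      ((volume.restrict (Ioc a b)).prod (volume.restrict (Ioc a b))) :=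
    (hf.mul_prod hg).indicator (measurableSet_lt measurable_fst measurable_snd)
  have h_left : ∀ x ∈ Ioc a b, ∫ y in Ioc a b, F x y = (∫ y in Ioc x b, g y) * f x := by
    intro x hx
    have hFx : F x = (Ioi x).indicator fun y => f x * g y := by
      ext y; by_cases h : x < y <;> simp [F, indicator, h]
    have hs : Ioi x ∩ Ioc a b = Ioc x b := by
      ext y; simp only [mem_inter_iff, mem_Ioi, mem_Ioc]
      exact ⟨fun h => ⟨h.1, h.2.2⟩, fun h => ⟨h.1, hx.1.trans h.1, h.2⟩⟩
    rw [hFx, MeasureTheory.integral_indicator measurableSet_Ioi,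
      Measure.restrict_restrict measurableSet_Ioi, hs, MeasureTheory.integral_const_mul, mul_comm]
  have h_right : ∀ y ∈ Ioc a b, ∫ x in Ioc a b, F x y = g y * ∫ x in Ioc a y, f x := by
    intro y hy
    have hFy : (fun x => F x y) = (Iio y).indicator fun x => f x * g y := by
      ext x; by_cases h : x < y <;> simp [F, indicator, h]
    have hs : Iio y ∩ Ioc a b = Ioo a y := by
      ext x; simp only [mem_inter_iff, mem_Iio, mem_Ioc, mem_Ioo]
      exact ⟨fun h => ⟨h.2.1, h.1⟩, fun h => ⟨h.2, h.1, h.2.le.trans hy.2⟩⟩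
    rw [hFy, MeasureTheory.integral_indicator measurableSet_Iio,
      Measure.restrict_restrict measurableSet_Iio, hs,
      ← integral_Ioc_eq_integral_Ioo, MeasureTheory.integral_mul_const, mul_comm]
  calc ∫ x in Ioc a b, (∫ y in Ioc x b, g y) * f x
      = ∫ x in Ioc a b, ∫ y in Ioc a b, F x y :=
        setIntegral_congr_fun measurableSet_Ioc fun x hx => (h_left x hx).symm
    _ = ∫ y in Ioc a b, ∫ x in Ioc a b, F x y := integral_integral_swap hF
    _ = ∫ y in Ioc a b, g y * ∫ x in Ioc a y, f x :=
        setIntegral_congr_fun measurableSet_Ioc h_right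

theorem integral_integral_mul_swap {f g : ℝ → ℝ} {a b : ℝ} (hab : a ≤ b)
    (hf : IntervalIntegrable f volume a b) (hg : IntervalIntegrable g volume a b) :
    ∫ x in a..b, (∫ y in x..b, g y) * f x = ∫ y in a..b, g y * ∫ x in a..y, f x := by
  have h_left : ∀ x ∈ Ioc a b, (∫ y in x..b, g y) * f x = (∫ y in Ioc x b, g y) * f x :=
    fun x hx => by rw [integral_of_le hx.2]
  have h_right : ∀ y ∈ Ioc a b, g y * (∫ x in a..y, f x) = g y * ∫ x in Ioc a y, f x :=
    fun y hy => by rw [integral_of_le hy.1.le]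
  rw [integral_of_le hab, integral_of_le hab, setIntegral_congr_fun measurableSet_Ioc h_left,
    setIntegral_congr_fun measurableSet_Ioc h_right]
  exact setIntegral_Ioc_integral_Ioc_mul_swap hf.1 hg.1

theorem IntervalIntegrable.fun_sum {ι : Type*} (s : Finset ι) {f : ι → ℝ → ℝ} {a b : ℝ}
    (hf : ∀ ℓ ∈ s, IntervalIntegrable (f ℓ) volume a b) :
    IntervalIntegrable (fun y => ∑ ℓ ∈ s, f ℓ y) volume a b := by
  simpa only [Finset.sum_fn] using IntervalIntegrable.sum s hf

section Potential

variable {ι : Type*} {s : Finset ι}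

noncomputable def primalPotential (s : Finset ι) (p : ι → ℝ → ℝ) (x : ℝ) : ℝ :=
  ∫ y in (0 : ℝ)..x, 1 / y * ∑ ℓ ∈ s, p ℓ y

theorem intervalIntegrable_one_div_mul_sum {p : ι → ℝ → ℝ}
    (hp : ∀ ℓ ∈ s, IntegrableOn (fun y => p ℓ y / y) (Ioc 0 1)) :
    IntervalIntegrable (fun y => 1 / y * ∑ ℓ ∈ s, p ℓ y) volume 0 1 := by
  simp only [Finset.mul_sum, one_div_mul_eq_div]
  exact IntervalIntegrable.fun_sum s fun ℓ hℓ =>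
    (intervalIntegrable_iff_integrableOn_Ioc_of_le zero_le_one).2 (hp ℓ hℓ)

theorem continuousOn_primalPotential {p : ι → ℝ → ℝ}
    (hp : ∀ ℓ ∈ s, IntegrableOn (fun y => p ℓ y / y) (Ioc 0 1)) :
    ContinuousOn (primalPotential s p) (Icc 0 1) := by
  have h := continuousOn_primitive_interval' (intervalIntegrable_one_div_mul_sum hp) left_mem_uIcc
  rwa [uIcc_of_le zero_le_one] at h

theorem primalPotential_sub {p p' : ι → ℝ → ℝ}
    (hp : ∀ ℓ ∈ s, IntegrableOn (fun y => p ℓ y / y) (Ioc 0 1))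
    (hp' : ∀ ℓ ∈ s, IntegrableOn (fun y => p' ℓ y / y) (Ioc 0 1)) {x : ℝ} (hx : x ∈ Icc 0 1) :
    primalPotential s (fun ℓ y => p ℓ y - p' ℓ y) x =
      primalPotential s p x - primalPotential s p' x := by
  have hsub : uIcc 0 x ⊆ uIcc (0 : ℝ) 1 := by
    rw [uIcc_of_le hx.1, uIcc_of_le zero_le_one]; exact Icc_subset_Icc_right hx.2
  simp only [primalPotential, Finset.sum_sub_distrib, mul_sub]
  exact integral_sub ((intervalIntegrable_one_div_mul_sum hp).mono_set hsub)
    ((intervalIntegrable_one_div_mul_sum hp').mono_set hsub)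

end Potential

theorem sum_integral_mul_le_of_primal_dual {ι : Type*} {s : Finset ι} {α p q : ι → ℝ → ℝ}
    {U W : ℝ → ℝ}
    (hα : ∀ k ∈ s, ContinuousOn (α k) (Icc 0 1))
    (hp_int : ∀ k ∈ s, IntervalIntegrable (p k) volume 0 1)
    (hp_div_int : ∀ k ∈ s, IntegrableOn (fun y => p k y / y) (Ioc 0 1))
    (hq_int : ∀ k ∈ s, IntervalIntegrable (q k) volume 0 1)
    (hU : ContinuousOn U (Icc 0 1)) (hW : IntervalIntegrable W volume 0 1)
    (hp_nonneg : ∀ k ∈ s, ∀ x ∈ Ioo (0 : ℝ) 1, 0 ≤ p k x)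
    (hq_nonneg : ∀ k ∈ s, ∀ x ∈ Ioo (0 : ℝ) 1, 0 ≤ q k x)
    (hprimal : ∀ k ∈ s, ∀ x ∈ Ioo (0 : ℝ) 1, p k x ≤ U x - primalPotential s p x)
    (hdual : ∀ k ∈ s, ∀ x ∈ Ioo (0 : ℝ) 1,
      α k x ≤ q k x + 1 / x * ∫ y in x..1, (∑ ℓ ∈ s, q ℓ y - W y)) :
    ∑ k ∈ s, ∫ x in (0 : ℝ)..1, α k x * p k x ≤
      (∫ x in (0 : ℝ)..1, (∑ k ∈ s, q k x) * U x) -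
        ∫ x in (0 : ℝ)..1, W x * primalPotential s p x := by
  set S := primalPotential s p
  set Q := fun x => ∑ k ∈ s, q k x
  set R := fun x => ∫ y in x..1, (Q y - W y)
  have hIcc : uIcc (0 : ℝ) 1 = Icc 0 1 := uIcc_of_le zero_le_one
  have hP := intervalIntegrable_one_div_mul_sum hp_div_int
  have hQ : IntervalIntegrable Q volume 0 1 := IntervalIntegrable.fun_sum s hq_int
  have hS : ContinuousOn S (Icc 0 1) := continuousOn_primalPotential hp_div_int
  have hR : ContinuousOn R (Icc 0 1) := hIcc ▸ continuousOn_primitive_interval_left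
    (hIcc ▸ (integrableOn_Icc_iff_integrableOn_Ioc).2 (hQ.sub hW).1)
  have hαp : ∀ k ∈ s, IntervalIntegrable (fun x => α k x * p k x) volume 0 1 :=
    fun k hk => (hp_int k hk).continuousOn_mul (hIcc ▸ hα k hk)
  have pointwise : ∀ x ∈ Ioo (0 : ℝ) 1,
      ∑ k ∈ s, α k x * p k x ≤ Q x * (U x - S x) + R x * (1 / x * ∑ k ∈ s, p k x) := by
    intro x hx
    simp only [Q, Finset.sum_mul, Finset.mul_sum, ← Finset.sum_add_distrib]
    refine Finset.sum_le_sum fun k hk => ?_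
    have h1 := mul_nonneg (sub_nonneg.2 (hdual k hk x hx)) (hp_nonneg k hk x hx)
    have h2 := mul_nonneg (hq_nonneg k hk x hx) (sub_nonneg.2 (hprimal k hk x hx))
    linarith
  have hQUS : IntervalIntegrable (fun x => Q x * (U x - S x)) volume 0 1 :=
    hQ.mul_continuousOn (hIcc ▸ hU.sub hS)
  have hRP : IntervalIntegrable (fun x => R x * (1 / x * ∑ k ∈ s, p k x)) volume 0 1 :=
    hP.continuousOn_mul (hIcc ▸ hR)
  calc ∑ k ∈ s, ∫ x in (0 : ℝ)..1, α k x * p k x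
      = ∫ x in (0 : ℝ)..1, ∑ k ∈ s, α k x * p k x := (integral_finsetSum hαp).symm
    _ ≤ ∫ x in (0 : ℝ)..1, (Q x * (U x - S x) + R x * (1 / x * ∑ k ∈ s, p k x)) :=
      integral_mono_on_of_le_Ioo zero_le_one (IntervalIntegrable.fun_sum s hαp) (hQUS.add hRP)
        pointwise
    _ = (∫ x in (0 : ℝ)..1, Q x * (U x - S x)) + ∫ x in (0 : ℝ)..1, (Q x - W x) * S x := by
      rw [integral_add hQUS hRP, integral_integral_mul_swap zero_le_one hP (hQ.sub hW)]
      rfl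
    _ = (∫ x in (0 : ℝ)..1, Q x * U x) - ∫ x in (0 : ℝ)..1, W x * S x := by
      rw [← integral_add hQUS ((hQ.sub hW).mul_continuousOn (hIcc ▸ hS)),
        ← integral_sub (hQ.mul_continuousOn (hIcc ▸ hU)) (hW.mul_continuousOn (hIcc ▸ hS))]
      congr 1; ext x; ring

section Levels

variable {J K : ℕ} {p q : ℕ → ℕ → ℝ → ℝ}

/-- With `1` after level `J`, every primal constraint, the last one included, reads
`p j k x ≤ primalPotentialSeq J K p (j + 1) x - primalPotentialSeq J K p j x`. -/
noncomputable def primalPotentialSeq (J K : ℕ) (p : ℕ → ℕ → ℝ → ℝ) (j : ℕ) (x : ℝ) : ℝ :=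
  if j ≤ J then primalPotential (Finset.Icc 1 K) (p j) x else 1

/-- `∑_ℓ q_{j-1|ℓ}` with `q_{0|ℓ} := 0`, so that the first dual constraint has the shape of the
others. -/
noncomputable def dualSumPred (K : ℕ) (q : ℕ → ℕ → ℝ → ℝ) (j : ℕ) (y : ℝ) : ℝ :=
  if j = 1 then 0 else ∑ ℓ ∈ Finset.Icc 1 K, q (j - 1) ℓ y

theorem primalPotentialSeq_of_le {j : ℕ} (h : j ≤ J) :
    primalPotentialSeq J K p j = primalPotential (Finset.Icc 1 K) (p j) :=
  funext fun _ => if_pos h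

theorem primalPotentialSeq_of_lt {j : ℕ} (h : J < j) : primalPotentialSeq J K p j = fun _ => 1 :=
  funext fun _ => if_neg h.not_ge

theorem dualSumPred_one : dualSumPred K q 1 = fun _ => 0 :=
  funext fun _ => if_pos rfl

theorem dualSumPred_succ {j : ℕ} (hj : 1 ≤ j) :
    dualSumPred K q (j + 1) = fun y => ∑ ℓ ∈ Finset.Icc 1 K, q j ℓ y :=
  funext fun _ => if_neg (by omega)

theorem continuousOn_primalPotentialSeq
    (hp_div_int : ∀ j ∈ Finset.Icc 1 J, ∀ k ∈ Finset.Icc 1 K,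
      IntegrableOn (fun y => p j k y / y) (Set.Ioc (0 : ℝ) 1) volume)
    {j : ℕ} (hj : 1 ≤ j) : ContinuousOn (primalPotentialSeq J K p j) (Icc 0 1) := by
  by_cases h : j ≤ J
  · rw [primalPotentialSeq_of_le h]
    exact continuousOn_primalPotential (hp_div_int j (Finset.mem_Icc.2 ⟨hj, h⟩))
  · rw [primalPotentialSeq_of_lt (not_le.1 h)]
    exact continuousOn_const

theorem intervalIntegrable_dualSumPred
    (hq_int : ∀ j ∈ Finset.Icc 1 J, ∀ k ∈ Finset.Icc 1 K,
      IntervalIntegrable (q j k) volume 0 1)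
    {j : ℕ} (hj : j ∈ Finset.Icc 1 J) : IntervalIntegrable (dualSumPred K q j) volume 0 1 := by
  obtain ⟨hj1, hjJ⟩ := Finset.mem_Icc.1 hj
  rcases hj1.eq_or_lt with rfl | h
  · rw [dualSumPred_one]; exact intervalIntegrable_const
  · obtain ⟨i, rfl⟩ : ∃ i, j = i + 1 := ⟨j - 1, by omega⟩
    rw [dualSumPred_succ (by omega)]
    exact IntervalIntegrable.fun_sum _ (hq_int i (Finset.mem_Icc.2 ⟨by omega, by omega⟩))

theorem le_primalPotentialSeq_sub
    (hp_div_int : ∀ j ∈ Finset.Icc 1 J, ∀ k ∈ Finset.Icc 1 K,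
      IntegrableOn (fun y => p j k y / y) (Set.Ioc (0 : ℝ) 1) volume)
    (hp_mid : ∀ j : ℕ, 1 ≤ j → j < J → ∀ k ∈ Finset.Icc 1 K, ∀ x ∈ Set.Icc (0 : ℝ) 1,
      p j k x ≤ ∫ y in (0 : ℝ)..x,
        (1 / y) * ∑ ℓ ∈ Finset.Icc 1 K, (p (j + 1) ℓ y - p j ℓ y))
    (hp_last : ∀ k ∈ Finset.Icc 1 K, ∀ x ∈ Set.Icc (0 : ℝ) 1,
      p J k x ≤ 1 - ∫ y in (0 : ℝ)..x, (1 / y) * ∑ ℓ ∈ Finset.Icc 1 K, p J ℓ y)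
    {j : ℕ} (hj : j ∈ Finset.Icc 1 J) {k : ℕ} (hk : k ∈ Finset.Icc 1 K) {x : ℝ}
    (hx : x ∈ Icc 0 1) :
    p j k x ≤ primalPotentialSeq J K p (j + 1) x - primalPotential (Finset.Icc 1 K) (p j) x := by
  obtain ⟨hj1, hjJ⟩ := Finset.mem_Icc.1 hj
  rcases hjJ.lt_or_eq with h | rfl
  · rw [primalPotentialSeq_of_le h]
    exact (hp_mid j hj1 h k hk x hx).trans_eq (primalPotential_sub
      (hp_div_int (j + 1) (Finset.mem_Icc.2 ⟨by omega, h⟩)) (hp_div_int j hj) hx)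
  · rw [primalPotentialSeq_of_lt (Nat.lt_succ_self j)]
    exact hp_last k hk x hx

theorem le_add_integral_sub_dualSumPred {α : ℕ → ℝ → ℝ}
    (hq_first : ∀ k ∈ Finset.Icc 1 K, ∀ x ∈ Set.Ioc (0 : ℝ) 1,
      α k x ≤ q 1 k x + (1 / x) * ∫ y in x..(1 : ℝ), ∑ ℓ ∈ Finset.Icc 1 K, q 1 ℓ y)
    (hq_mid : ∀ j : ℕ, 1 < j → j ≤ J → ∀ k ∈ Finset.Icc 1 K, ∀ x ∈ Set.Ioc (0 : ℝ) 1,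
      α k x ≤ q j k x + (1 / x) *
        ∫ y in x..(1 : ℝ), ∑ ℓ ∈ Finset.Icc 1 K, (q j ℓ y - q (j - 1) ℓ y))
    {j : ℕ} (hj : j ∈ Finset.Icc 1 J) {k : ℕ} (hk : k ∈ Finset.Icc 1 K) {x : ℝ}
    (hx : x ∈ Ioc 0 1) :
    α k x ≤ q j k x + 1 / x *
      ∫ y in x..1, (∑ ℓ ∈ Finset.Icc 1 K, q j ℓ y - dualSumPred K q j y) := by
  obtain ⟨hj1, hjJ⟩ := Finset.mem_Icc.1 hj
  rcases hj1.eq_or_lt with rfl | h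
  · simpa only [dualSumPred_one, sub_zero] using hq_first k hk x hx
  · simpa only [dualSumPred, if_neg h.ne', Finset.sum_sub_distrib] using hq_mid j h hjJ k hk x hx

end Levels

theorem weak_duality_CP_CD_JK_general
    (J K : ℕ) (hJ : 1 ≤ J)
    (α : ℕ → ℝ → ℝ)
    (hα : ∀ k ∈ Finset.Icc 1 K, ∀ x : ℝ,
      α k x = x ^ (k - 1) *
        ∑ ℓ ∈ Finset.Icc k K, ((ℓ - 1).choose (k - 1) : ℝ) * (1 - x) ^ (ℓ - k))
    (p q : ℕ → ℕ → ℝ → ℝ)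
    -- integrability assumptions
    (hp_int : ∀ j ∈ Finset.Icc 1 J, ∀ k ∈ Finset.Icc 1 K,
      IntervalIntegrable (p j k) volume 0 1)
    (hp_div_int : ∀ j ∈ Finset.Icc 1 J, ∀ k ∈ Finset.Icc 1 K,
      IntegrableOn (fun y => p j k y / y) (Set.Ioc (0 : ℝ) 1) volume)
    (hq_int : ∀ j ∈ Finset.Icc 1 J, ∀ k ∈ Finset.Icc 1 K,
      IntervalIntegrable (q j k) volume 0 1)
    -- primal feasibility
    (hp_nonneg : ∀ j ∈ Finset.Icc 1 J, ∀ k ∈ Finset.Icc 1 K,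
      ∀ x ∈ Set.Icc (0 : ℝ) 1, 0 ≤ p j k x)
    (hp_mid : ∀ j : ℕ, 1 ≤ j → j < J → ∀ k ∈ Finset.Icc 1 K, ∀ x ∈ Set.Icc (0 : ℝ) 1,
      p j k x ≤ ∫ y in (0 : ℝ)..x,
        (1 / y) * ∑ ℓ ∈ Finset.Icc 1 K, (p (j + 1) ℓ y - p j ℓ y))
    (hp_last : ∀ k ∈ Finset.Icc 1 K, ∀ x ∈ Set.Icc (0 : ℝ) 1,
      p J k x ≤ 1 - ∫ y in (0 : ℝ)..x, (1 / y) * ∑ ℓ ∈ Finset.Icc 1 K, p J ℓ y)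
    -- dual feasibility
    (hq_nonneg : ∀ j ∈ Finset.Icc 1 J, ∀ k ∈ Finset.Icc 1 K,
      ∀ x ∈ Set.Ioc (0 : ℝ) 1, 0 ≤ q j k x)
    (hq_first : ∀ k ∈ Finset.Icc 1 K, ∀ x ∈ Set.Ioc (0 : ℝ) 1,
      α k x ≤ q 1 k x + (1 / x) * ∫ y in x..(1 : ℝ), ∑ ℓ ∈ Finset.Icc 1 K, q 1 ℓ y)
    (hq_mid : ∀ j : ℕ, 1 < j → j ≤ J → ∀ k ∈ Finset.Icc 1 K, ∀ x ∈ Set.Ioc (0 : ℝ) 1,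
      α k x ≤ q j k x + (1 / x) *
        ∫ y in x..(1 : ℝ), ∑ ℓ ∈ Finset.Icc 1 K, (q j ℓ y - q (j - 1) ℓ y)) :
    ∑ j ∈ Finset.Icc 1 J, ∑ k ∈ Finset.Icc 1 K, (∫ x in (0 : ℝ)..1, α k x * p j k x)
      ≤ ∑ k ∈ Finset.Icc 1 K, ∫ x in (0 : ℝ)..1, q J k x := by
  have hα_cont : ∀ k ∈ Finset.Icc 1 K, ContinuousOn (α k) (Icc 0 1) := fun k hk => by
    rw [funext (hα k hk)]; fun_prop
  let T : ℕ → ℝ := fun j =>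
    ∫ x in (0 : ℝ)..1, dualSumPred K q j x * primalPotentialSeq J K p j x
  have level : ∀ j ∈ Finset.Icc 1 J,
      ∑ k ∈ Finset.Icc 1 K, ∫ x in (0 : ℝ)..1, α k x * p j k x ≤ T (j + 1) - T j := by
    intro j hj
    obtain ⟨hj1, hjJ⟩ := Finset.mem_Icc.1 hj
    refine (sum_integral_mul_le_of_primal_dual hα_cont (hp_int j hj) (hp_div_int j hj)
      (hq_int j hj) (continuousOn_primalPotentialSeq hp_div_int (Nat.le_add_left 1 j))
      (intervalIntegrable_dualSumPred hq_int hj)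
      (fun k hk x hx => hp_nonneg j hj k hk x (Ioo_subset_Icc_self hx))
      (fun k hk x hx => hq_nonneg j hj k hk x (Ioo_subset_Ioc_self hx))
      (fun k hk x hx => le_primalPotentialSeq_sub hp_div_int hp_mid hp_last hj hk
        (Ioo_subset_Icc_self hx))
      (fun k hk x hx => le_add_integral_sub_dualSumPred hq_first hq_mid hj hk
        (Ioo_subset_Ioc_self hx))).trans_eq ?_
    simp only [T, dualSumPred_succ hj1, primalPotentialSeq_of_le hjJ]
  calc ∑ j ∈ Finset.Icc 1 J, ∑ k ∈ Finset.Icc 1 K, ∫ x in (0 : ℝ)..1, α k x * p j k x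
      ≤ ∑ j ∈ Finset.Icc 1 J, (T (j + 1) - T j) := Finset.sum_le_sum level
    _ = T (J + 1) - T 1 := Finset.sum_Icc_sub hJ T
    _ = ∑ k ∈ Finset.Icc 1 K, ∫ x in (0 : ℝ)..1, q J k x := by
      simp only [T, dualSumPred_succ hJ, primalPotentialSeq_of_lt (Nat.lt_succ_self J),
        dualSumPred_one, mul_one, zero_mul, intervalIntegral.integral_zero, sub_zero]
      exact integral_finsetSum fun k hk => hq_int J (Finset.right_mem_Icc.2 hJ) k hk

/-- Weak duality between the continuous LP `CP(J,K)` for the `J`-choice `K`-best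
secretary problem in the infinite model and its dual `CD(J,K)`, where
`α_k(x) = x^(k-1) ∑_{ℓ=k}^K C(ℓ-1,k-1) (1-x)^(ℓ-k)`:  the primal objective
`∑_{j,k} ∫_0^1 α_k(x) p_{j|k}(x) dx` is at most the dual objective
`∑_k ∫_0^1 q_{J|k}(x) dx`. -/
theorem weak_duality_CP_CD_JK
    (J K : ℕ) (hJ : 1 ≤ J) (hK : 1 ≤ K)
    (α : ℕ → ℝ → ℝ)
    (hα : ∀ k ∈ Finset.Icc 1 K, ∀ x : ℝ,
      α k x = x ^ (k - 1) *
        ∑ ℓ ∈ Finset.Icc k K, ((ℓ - 1).choose (k - 1) : ℝ) * (1 - x) ^ (ℓ - k))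
    (p q : ℕ → ℕ → ℝ → ℝ)
    -- integrability assumptions
    (hp_int : ∀ j ∈ Finset.Icc 1 J, ∀ k ∈ Finset.Icc 1 K,
      IntervalIntegrable (p j k) volume 0 1)
    (hp_div_int : ∀ j ∈ Finset.Icc 1 J, ∀ k ∈ Finset.Icc 1 K,
      IntegrableOn (fun y => p j k y / y) (Set.Ioc (0 : ℝ) 1) volume)
    (hq_int : ∀ j ∈ Finset.Icc 1 J, ∀ k ∈ Finset.Icc 1 K,
      IntervalIntegrable (q j k) volume 0 1)
    -- primal feasibility
    (hp_nonneg : ∀ j ∈ Finset.Icc 1 J, ∀ k ∈ Finset.Icc 1 K,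
      ∀ x ∈ Set.Icc (0 : ℝ) 1, 0 ≤ p j k x)
    (hp_mid : ∀ j : ℕ, 1 ≤ j → j < J → ∀ k ∈ Finset.Icc 1 K, ∀ x ∈ Set.Icc (0 : ℝ) 1,
      p j k x ≤ ∫ y in (0 : ℝ)..x,
        (1 / y) * ∑ ℓ ∈ Finset.Icc 1 K, (p (j + 1) ℓ y - p j ℓ y))
    (hp_last : ∀ k ∈ Finset.Icc 1 K, ∀ x ∈ Set.Icc (0 : ℝ) 1,
      p J k x ≤ 1 - ∫ y in (0 : ℝ)..x, (1 / y) * ∑ ℓ ∈ Finset.Icc 1 K, p J ℓ y)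
    -- dual feasibility
    (hq_nonneg : ∀ j ∈ Finset.Icc 1 J, ∀ k ∈ Finset.Icc 1 K,
      ∀ x ∈ Set.Ioc (0 : ℝ) 1, 0 ≤ q j k x)
    (hq_first : ∀ k ∈ Finset.Icc 1 K, ∀ x ∈ Set.Ioc (0 : ℝ) 1,
      α k x ≤ q 1 k x + (1 / x) * ∫ y in x..(1 : ℝ), ∑ ℓ ∈ Finset.Icc 1 K, q 1 ℓ y)
    (hq_mid : ∀ j : ℕ, 1 < j → j ≤ J → ∀ k ∈ Finset.Icc 1 K, ∀ x ∈ Set.Ioc (0 : ℝ) 1,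
      α k x ≤ q j k x + (1 / x) *
        ∫ y in x..(1 : ℝ), ∑ ℓ ∈ Finset.Icc 1 K, (q j ℓ y - q (j - 1) ℓ y)) :
    ∑ j ∈ Finset.Icc 1 J, ∑ k ∈ Finset.Icc 1 K, (∫ x in (0 : ℝ)..1, α k x * p j k x)
      ≤ ∑ k ∈ Finset.Icc 1 K, ∫ x in (0 : ℝ)..1, q J k x :=
  weak_duality_CP_CD_JK_general J K hJ α hα p q hp_int hp_div_int hq_int hp_nonneg hp_mid hp_last
    hq_nonneg hq_first hq_mid
end

section
/- Define q : (0,1] → ℝ by q(x) := max(0, 1 + ln x). Then: (i) q(x) + (1/x)·∫_x^1 q(y) dy ≥ 1 for all x ∈ (0,1], with equality for all x ∈ [e^{−1}, 1]; (ii) q vanishes on (0, e^{−1}]; and (iii) ∫_0^1 q(x) dx = e^{−1}. -/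
open MeasureTheory intervalIntegral Real

/-!
On `[1/e, 1]` the function `q = 1 + log` has antiderivative `x log x`, so `∫_x^1 q = -x log x`
and the constraint is tight there. Below `1/e` the function `q` vanishes, so
`∫_x^1 q = ∫_{1/e}^1 q = 1/e`, which is at least `x`; at `x = 0` this is the objective value.
-/

noncomputable def secretaryDual (x : ℝ) : ℝ := max 0 (1 + log x)

noncomputable def cd1Constraint (q : ℝ → ℝ) (x : ℝ) : ℝ := q x + (1 / x) * ∫ y in x..1, q y

lemma integral_one_add_log (a b : ℝ) : ∫ x in a..b, (1 + log x) = b * log b - a * log a := by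
  rw [integral_add intervalIntegrable_const intervalIntegrable_log', integral_log]
  simp

lemma intervalIntegrable_secretaryDual (a b : ℝ) :
    IntervalIntegrable secretaryDual volume a b := by
  have h : IntervalIntegrable (fun x => 1 + log x) volume a b :=
    intervalIntegrable_const.add intervalIntegrable_log'
  have hq : secretaryDual = fun x => max (1 + log x) 0 := funext fun x => max_comm _ _
  rw [hq]
  exact ⟨h.1.pos_part, h.2.pos_part⟩

lemma secretaryDual_eq_zero {x : ℝ} (hx : 0 < x) (hxe : x ≤ exp (-1)) : secretaryDual x = 0 := by
  have : log x ≤ -1 := (log_le_iff_le_exp hx).2 hxe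
  exact max_eq_left (by linarith)

lemma secretaryDual_eq_one_add_log {x : ℝ} (hx : exp (-1) ≤ x) :
    secretaryDual x = 1 + log x := by
  have : -1 ≤ log x := (le_log_iff_exp_le ((exp_pos _).trans_le hx)).2 hx
  exact max_eq_right (by linarith)

lemma integral_secretaryDual_of_exp_neg_one_le {x : ℝ} (hx : exp (-1) ≤ x) :
    ∫ y in x..1, secretaryDual y = -(x * log x) := by
  have hle : exp (-1) ≤ min x 1 := le_min hx (exp_le_one_iff.2 (by norm_num))
  rw [integral_congr fun y hy => secretaryDual_eq_one_add_log (hle.trans hy.1),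
    integral_one_add_log]
  simp

lemma integral_secretaryDual_eq_zero {x : ℝ} (hx : 0 ≤ x) (hxe : x ≤ exp (-1)) :
    ∫ y in x..exp (-1), secretaryDual y = 0 := by
  refine integral_zero_ae (ae_of_all _ fun y hy => ?_)
  rw [Set.uIoc_of_le hxe] at hy
  exact secretaryDual_eq_zero (hx.trans_lt hy.1) hy.2

lemma integral_secretaryDual_of_le_exp_neg_one {x : ℝ} (hx : 0 ≤ x) (hxe : x ≤ exp (-1)) :
    ∫ y in x..1, secretaryDual y = exp (-1) := by
  rw [← integral_add_adjacent_intervals (intervalIntegrable_secretaryDual x (exp (-1)))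
      (intervalIntegrable_secretaryDual _ 1), integral_secretaryDual_eq_zero hx hxe,
    integral_secretaryDual_of_exp_neg_one_le le_rfl, log_exp]
  ring

lemma cd1Constraint_secretaryDual_of_exp_neg_one_le {x : ℝ} (hx : exp (-1) ≤ x) :
    cd1Constraint secretaryDual x = 1 := by
  have hx0 : x ≠ 0 := ((exp_pos _).trans_le hx).ne'
  rw [cd1Constraint, secretaryDual_eq_one_add_log hx,
    integral_secretaryDual_of_exp_neg_one_le hx]
  field_simp
  ring

lemma one_le_cd1Constraint_secretaryDual {x : ℝ} (hx : 0 < x) (hxe : x ≤ exp (-1)) :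
    1 ≤ cd1Constraint secretaryDual x := by
  rw [cd1Constraint, secretaryDual_eq_zero hx hxe,
    integral_secretaryDual_of_le_exp_neg_one hx.le hxe, zero_add, one_div_mul_eq_div,
    one_le_div hx]
  exact hxe

/-- The optimal dual solution `q(x) = max(0, 1 + ln x)` of the continuous LP dual
`CD(1)` for the classical secretary problem: it is feasible (constraint `≥ 1` on
`(0,1]`, with equality on `[1/e, 1]`), vanishes on `(0, 1/e]`, and its objective
value is `∫_0^1 q = 1/e`. -/
theorem optimal_dual_CD1
    (q : ℝ → ℝ) (hq : ∀ x : ℝ, q x = max 0 (1 + Real.log x)) :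
    (∀ x ∈ Set.Ioc (0 : ℝ) 1, 1 ≤ q x + (1 / x) * ∫ y in x..(1 : ℝ), q y) ∧
    (∀ x ∈ Set.Icc (Real.exp (-1)) 1, q x + (1 / x) * (∫ y in x..(1 : ℝ), q y) = 1) ∧
    (∀ x ∈ Set.Ioc (0 : ℝ) (Real.exp (-1)), q x = 0) ∧
    (∫ x in (0 : ℝ)..1, q x) = Real.exp (-1) := by
  obtain rfl : q = secretaryDual := funext hq
  refine ⟨fun x hx => ?_, fun x hx => cd1Constraint_secretaryDual_of_exp_neg_one_le hx.1,
    fun x hx => secretaryDual_eq_zero hx.1 hx.2,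
    integral_secretaryDual_of_le_exp_neg_one le_rfl (exp_pos _).le⟩
  rcases le_total x (exp (-1)) with hxe | hxe
  · exact one_le_cd1Constraint_secretaryDual hx.1 hxe
  · exact (cd1Constraint_secretaryDual_of_exp_neg_one_le hxe).ge
end

section
/- For every integer J ≥ 1 there exist rational numbers 0 < θ_1 < θ_2 < ... < θ_J with θ_1 = 1, and continuous functions q_1,...,q_J : (0,1] → ℝ, such that, setting t_j := e^{−θ_j} and q_0 ≡ 0, for every j ∈ {1,...,J}: (i) q_j(x) ≥ 0 for all x ∈ (0,1]; (ii) q_j(x) = 0 for all x ∈ (0, t_j]; and (iii) q_j(x) + (1/x)·∫_x^1 [q_j(y) − q_{j−1}(y)] dy = 1 for all x ∈ [t_j, 1]. -/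
open MeasureTheory intervalIntegral

/-!
Write `x = e^{-u}` and `q_j(x) = max 0 (1 - F_j(u))`. Condition (iii) then becomes the
recursion `F_0 ≡ 1`, `F_j' = min 1 F_{j-1}`, `F_j(0) = 0`, and `θ_j` is the point where `F_j`
reaches `1`. Past `θ_j` the integrand of `F_{j+1}` is `1`, so
`θ_{j+1} = θ_j + 1 - F_{j+1}(θ_j)`; the strict decrease `F_{j+1} < F_j` on `(0, ∞)` makes
the `θ_j` strictly increasing. Between consecutive thresholds every `F_j` is a polynomial with
rational coefficients, so inductively every `F_{j+1}(θ_i)`, hence every `θ_j`, is rational.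
-/

open Polynomial Set

theorem Polynomial.exists_derivative_eq {K : Type*} [Field K] [CharZero K] (p : K[X]) :
    ∃ P : K[X], derivative P = p := by
  induction p using Polynomial.induction_on' with
  | add p q hp hq =>
    obtain ⟨P, rfl⟩ := hp
    obtain ⟨Q, rfl⟩ := hq
    exact ⟨P + Q, derivative_add⟩
  | monomial n a =>
    refine ⟨monomial (n + 1) (a / (n + 1)), ?_⟩
    rw [derivative_monomial]
    congr 1
    push_cast
    field_simp

def IsRatPolyOn (f : ℝ → ℝ) (s : Set ℝ) : Prop :=
  ∃ p : ℚ[X], EqOn f (fun u => aeval u p) s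

namespace IsRatPolyOn

variable {f g : ℝ → ℝ} {s : Set ℝ}

theorem congr (hf : IsRatPolyOn f s) (h : EqOn f g s) : IsRatPolyOn g s := by
  obtain ⟨p, hp⟩ := hf
  exact ⟨p, h.symm.trans hp⟩

theorem const_one : IsRatPolyOn (fun _ => 1) s :=
  ⟨1, fun _ _ => by simp⟩

theorem apply_mem_range {r : ℝ} (hf : IsRatPolyOn f s) (hr : r ∈ range ((↑) : ℚ → ℝ))
    (hrs : r ∈ s) : f r ∈ range ((↑) : ℚ → ℝ) := by
  obtain ⟨p, hp⟩ := hf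
  obtain ⟨r, rfl⟩ := hr
  exact ⟨p.eval r, by
    simpa [hp hrs] using (aeval_algebraMap_apply_eq_algebraMap_eval (A := ℝ) r p).symm⟩

theorem of_eq_add_integral {F : ℝ → ℝ} {a b : ℝ} (hg : IsRatPolyOn g (Icc a b))
    (ha : a ∈ range ((↑) : ℚ → ℝ)) (hFa : F a ∈ range ((↑) : ℚ → ℝ))
    (hF : ∀ u ∈ Icc a b, F u = F a + ∫ v in a..u, g v) : IsRatPolyOn F (Icc a b) := by
  obtain ⟨p, hp⟩ := hg
  obtain ⟨P, hP⟩ := exists_derivative_eq p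
  obtain ⟨a, rfl⟩ := ha
  obtain ⟨c, hc⟩ := hFa
  refine ⟨C (c - P.eval a) + P, fun u hu => ?_⟩
  have hint : ∫ v in (a : ℝ)..u, g v = aeval u P - aeval (a : ℝ) P := by
    rw [integral_congr (hp.mono ((uIcc_of_le hu.1).trans_subset (Icc_subset_Icc le_rfl hu.2))),
      integral_eq_sub_of_hasDerivAt (fun x _ => hP ▸ P.hasDerivAt_aeval x)
        ((p.continuous_aeval).intervalIntegrable _ _)]
  have hPa := aeval_algebraMap_apply_eq_algebraMap_eval (A := ℝ) a P
  simp only [eq_ratCast] at hPa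
  simp only [hF u hu, hint, ← hc, map_add, aeval_C, eq_ratCast, hPa]
  push_cast
  ring

end IsRatPolyOn

namespace JChoice

/-- `F j u = 1 - q_j(e^{-u})` on `[0, θ_j]`. -/
noncomputable def F : ℕ → ℝ → ℝ
  | 0 => fun _ => 1
  | j + 1 => fun u => ∫ v in (0 : ℝ)..u, min 1 (F j v)

theorem continuous_F : ∀ j, Continuous (F j)
  | 0 => continuous_const
  | j + 1 => continuous_primitive
      (fun _ _ => (continuous_const.min (continuous_F j)).intervalIntegrable _ _) 0

theorem continuous_min_one_F (j : ℕ) : Continuous fun v => min 1 (F j v) :=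
  continuous_const.min (continuous_F j)

theorem hasDerivAt_F_succ (j : ℕ) (u : ℝ) : HasDerivAt (F (j + 1)) (min 1 (F j u)) u :=
  ((continuous_min_one_F j).integral_hasStrictDerivAt 0 u).hasDerivAt

theorem F_succ_sub (j : ℕ) (a b : ℝ) :
    F (j + 1) b - F (j + 1) a = ∫ v in a..b, min 1 (F j v) :=
  integral_interval_sub_left ((continuous_min_one_F j).intervalIntegrable _ _)
    ((continuous_min_one_F j).intervalIntegrable _ _)

@[simp] theorem F_succ_zero (j : ℕ) : F (j + 1) 0 = 0 := integral_same

theorem F_nonneg : ∀ j {u : ℝ}, 0 ≤ u → 0 ≤ F j u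
  | 0, _, _ => zero_le_one
  | j + 1, _, hu => integral_nonneg hu fun _ hv => le_min zero_le_one (F_nonneg j hv.1)

theorem F_succ_le_self (j : ℕ) {u : ℝ} (hu : 0 ≤ u) : F (j + 1) u ≤ u := by
  simpa [F] using integral_mono_on hu ((continuous_min_one_F j).intervalIntegrable _ _)
    (intervalIntegrable_const (μ := volume)) fun v _ => min_le_left 1 (F j v)

theorem monotoneOn_F : ∀ j, MonotoneOn (F j) (Ici 0)
  | 0 => fun _ _ _ _ _ => le_rfl
  | j + 1 => fun a ha b _ hab => by
    have := F_succ_sub j a b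
    have : 0 ≤ ∫ v in a..b, min 1 (F j v) :=
      integral_nonneg hab fun v hv => le_min zero_le_one (F_nonneg j (le_trans ha hv.1))
    linarith

theorem min_one_F_succ_le : ∀ j {v : ℝ}, 0 ≤ v → min 1 (F (j + 1) v) ≤ min 1 (F j v)
  | 0, _, _ => by simp [F]
  | j + 1, v, hv => by
    refine min_le_min le_rfl ?_
    have h := F_succ_sub (j + 1) 0 v
    have h' := F_succ_sub j 0 v
    have : ∫ w in (0 : ℝ)..v, min 1 (F (j + 1) w) ≤ ∫ w in (0 : ℝ)..v, min 1 (F j w) :=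
      integral_mono_on hv ((continuous_min_one_F _).intervalIntegrable _ _)
        ((continuous_min_one_F _).intervalIntegrable _ _)
        fun w hw => min_one_F_succ_le j hw.1
    simp only [F_succ_zero, sub_zero] at h h'
    linarith

/-- The strict decrease only needs to be seen near `0`, where all values are below `1`. -/
theorem F_succ_succ_lt_of {j : ℕ}
    (h : ∀ c ∈ Ioo (0 : ℝ) 1, min 1 (F (j + 1) c) < min 1 (F j c)) {u : ℝ} (hu : 0 < u) :
    F (j + 2) u < F (j + 1) u := by
  have hlt : ∫ v in (0 : ℝ)..u, min 1 (F (j + 1) v) < ∫ v in (0 : ℝ)..u, min 1 (F j v) := by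
    refine integral_lt_integral_of_continuousOn_of_le_of_exists_lt hu
      (continuous_min_one_F _).continuousOn (continuous_min_one_F _).continuousOn
      (fun v hv => min_one_F_succ_le j hv.1.le)
      ⟨min u 1 / 2, ⟨by positivity, ?_⟩, h _ ⟨?_, ?_⟩⟩
    all_goals
      have := min_le_left u 1
      have := min_le_right u 1
      have : 0 < min u 1 := lt_min hu one_pos
      linarith
  have h1 := F_succ_sub (j + 1) 0 u
  have h2 := F_succ_sub j 0 u
  simp only [F_succ_zero, sub_zero] at h1 h2
  linarith

theorem min_one_F_succ_lt : ∀ j, ∀ c ∈ Ioo (0 : ℝ) 1, min 1 (F (j + 1) c) < min 1 (F j c)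
  | 0, c, hc => by simpa [F] using hc.2
  | j + 1, c, hc => by
    have hlt := F_succ_succ_lt_of (min_one_F_succ_lt j) hc.1
    have hle := F_succ_le_self j hc.1.le
    rw [min_eq_right (by linarith [hc.2]), min_eq_right (by linarith [hc.2])]
    exact hlt

theorem F_succ_succ_lt (j : ℕ) {u : ℝ} (hu : 0 < u) : F (j + 2) u < F (j + 1) u :=
  F_succ_succ_lt_of (min_one_F_succ_lt j) hu

/-- Past `a` the integrand `min 1 (F j)` is `1`, so `F (j + 1)` grows with unit slope. -/
theorem F_succ_add_one_sub {j : ℕ} {a : ℝ} (ha : 0 ≤ a) (hFa : F j a = 1)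
    (hle : F (j + 1) a ≤ 1) : F (j + 1) (a + 1 - F (j + 1) a) = 1 := by
  have hab : a ≤ a + 1 - F (j + 1) a := by linarith
  have h := F_succ_sub j a (a + 1 - F (j + 1) a)
  rw [integral_congr (g := fun _ => 1) fun v hv => by
    rw [uIcc_of_le hab] at hv
    exact min_eq_left (hFa ▸ monotoneOn_F j ha (ha.trans hv.1) hv.1)] at h
  simp only [intervalIntegral.integral_const, smul_eq_mul, mul_one] at h
  linarith

noncomputable def θ : ℕ → ℝ
  | 0 => 0
  | j + 1 => θ j + 1 - F (j + 1) (θ j)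

theorem θ_succ (j : ℕ) : θ (j + 1) = θ j + 1 - F (j + 1) (θ j) := rfl

theorem θ_one : θ 1 = 1 := by simp [θ]

theorem F_θ_succ_and_pos : ∀ j, F (j + 1) (θ (j + 1)) = 1 ∧ 0 < θ (j + 1)
  | 0 => ⟨F_succ_add_one_sub le_rfl rfl (by simp [θ]), by simp [θ_one]⟩
  | j + 1 => by
    obtain ⟨hF, hpos⟩ := F_θ_succ_and_pos j
    have hlt : F (j + 2) (θ (j + 1)) < 1 := hF ▸ F_succ_succ_lt j hpos
    exact ⟨F_succ_add_one_sub hpos.le hF hlt.le, by linarith [θ_succ (j + 1)]⟩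

theorem F_θ : ∀ j, F j (θ j) = 1
  | 0 => rfl
  | j + 1 => (F_θ_succ_and_pos j).1

theorem θ_lt_succ : ∀ j, θ j < θ (j + 1)
  | 0 => by simp [θ]
  | j + 1 => by
    obtain ⟨hF, hpos⟩ := F_θ_succ_and_pos j
    linarith [F_succ_succ_lt j hpos, θ_succ (j + 1)]

theorem strictMono_θ : StrictMono θ := strictMono_nat_of_lt_succ θ_lt_succ

theorem θ_nonneg (j : ℕ) : 0 ≤ θ j := strictMono_θ.monotone (Nat.zero_le j)

theorem F_le_one {j : ℕ} {u : ℝ} (hu0 : 0 ≤ u) (hu : u ≤ θ j) : F j u ≤ 1 :=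
  F_θ j ▸ monotoneOn_F j hu0 (θ_nonneg j) hu

theorem one_le_F {j : ℕ} {u : ℝ} (hu : θ j ≤ u) : 1 ≤ F j u :=
  F_θ j ▸ monotoneOn_F j (θ_nonneg j) ((θ_nonneg j).trans hu) hu

theorem isRatPolyOn_min_one_F {j : ℕ}
    (hpoly : ∀ i < j, IsRatPolyOn (F j) (Icc (θ i) (θ (i + 1)))) {i : ℕ} (hi : i ≤ j) :
    IsRatPolyOn (fun v => min 1 (F j v)) (Icc (θ i) (θ (i + 1))) := by
  rcases hi.lt_or_eq with hi | rfl
  · refine (hpoly i hi).congr fun v hv =>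
      (min_eq_right (F_le_one ((θ_nonneg i).trans hv.1) ?_)).symm
    exact hv.2.trans (strictMono_θ.monotone hi)
  · exact IsRatPolyOn.const_one.congr fun v hv => (min_eq_left (one_le_F hv.1)).symm

theorem isRatPolyOn_F_succ {j : ℕ} {a b : ℝ}
    (hmin : IsRatPolyOn (fun v => min 1 (F j v)) (Icc a b)) (ha : a ∈ range ((↑) : ℚ → ℝ))
    (hFa : F (j + 1) a ∈ range ((↑) : ℚ → ℝ)) : IsRatPolyOn (F (j + 1)) (Icc a b) :=
  hmin.of_eq_add_integral ha hFa fun u _ => by rw [← F_succ_sub]; ring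

def RationalUpTo (j : ℕ) : Prop :=
  (∀ i ≤ j, θ i ∈ range ((↑) : ℚ → ℝ)) ∧
    ∀ i < j, IsRatPolyOn (F j) (Icc (θ i) (θ (i + 1)))

theorem RationalUpTo.succ {j : ℕ} (h : RationalUpTo j) : RationalUpTo (j + 1) := by
  obtain ⟨hθ, hpoly⟩ := h
  have hvals : ∀ i ≤ j, F (j + 1) (θ i) ∈ range ((↑) : ℚ → ℝ) := by
    intro i
    induction i with
    | zero => exact fun _ => ⟨0, by simp [θ]⟩
    | succ i ih =>
      intro hi
      exact (isRatPolyOn_F_succ (isRatPolyOn_min_one_F hpoly (by omega)) (hθ i (by omega))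
        (ih (by omega))).apply_mem_range (hθ (i + 1) hi)
        (right_mem_Icc.2 (θ_lt_succ i).le)
  refine ⟨fun i hi => ?_, fun i hi => isRatPolyOn_F_succ (isRatPolyOn_min_one_F hpoly (by omega))
    (hθ i (by omega)) (hvals i (by omega))⟩
  rcases hi.lt_or_eq with hi | rfl
  · exact hθ i (by omega)
  · obtain ⟨a, ha⟩ := hθ j le_rfl
    obtain ⟨c, hc⟩ := hvals j le_rfl
    exact ⟨a + 1 - c, by simp [θ, ha, hc]⟩

theorem rationalUpTo : ∀ j, RationalUpTo j
  | 0 => ⟨fun i hi => ⟨0, by simp [θ, Nat.le_zero.1 hi]⟩, by simp⟩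
  | j + 1 => (rationalUpTo j).succ

theorem θ_mem_range_ratCast (j : ℕ) : θ j ∈ range ((↑) : ℚ → ℝ) :=
  (rationalUpTo j).1 j le_rfl

noncomputable def q (j : ℕ) (x : ℝ) : ℝ := max 0 (1 - F j (-Real.log x))

theorem q_zero (x : ℝ) : q 0 x = 0 := by simp [q, F]

theorem q_nonneg (j : ℕ) (x : ℝ) : 0 ≤ q j x := le_max_left _ _

theorem one_sub_q (j : ℕ) (x : ℝ) : 1 - q j x = min 1 (F j (-Real.log x)) := by
  rw [q, ← min_sub_sub_left, sub_zero, sub_sub_cancel]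

theorem continuousOn_q (j : ℕ) : ContinuousOn (q j) (Ioi 0) :=
  (continuous_const.max continuous_id).comp_continuousOn (continuousOn_const.sub
    ((continuous_F j).comp_continuousOn (Real.continuousOn_log.mono fun _ hx => ne_of_gt hx).neg))

theorem q_eq_zero {j : ℕ} {x : ℝ} (hx0 : 0 < x) (hx : x ≤ Real.exp (-θ j)) : q j x = 0 :=
  max_eq_left (sub_nonpos.2 (one_le_F (by linarith [(Real.log_le_iff_le_exp hx0).2 hx])))

theorem q_eq_one_sub_F {j : ℕ} {x : ℝ} (hx : x ∈ Icc (Real.exp (-θ j)) 1) :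
    q j x = 1 - F j (-Real.log x) := by
  have hx0 : 0 < x := (Real.exp_pos _).trans_le hx.1
  refine max_eq_right (sub_nonneg.2 (F_le_one ?_ ?_))
  · linarith [Real.log_nonpos hx0.le hx.2]
  · linarith [(Real.le_log_iff_exp_le hx0).2 hx.1]

/-- `y ↦ y * F (j + 1) (-log y)` is a primitive of `q j - q (j + 1)` on `[e^{-θ_{j+1}}, 1]`. -/
theorem integral_q_succ_sub_q {j : ℕ} {x : ℝ} (hx : x ∈ Icc (Real.exp (-θ (j + 1))) 1) :
    ∫ y in x..1, (q (j + 1) y - q j y) = x * F (j + 1) (-Real.log x) := by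
  have hsub : uIcc x 1 ⊆ Icc (Real.exp (-θ (j + 1))) 1 := by
    rw [uIcc_of_le hx.2]
    exact Icc_subset_Icc hx.1 le_rfl
  have hpos : ∀ y ∈ uIcc x 1, 0 < y := fun y hy => (Real.exp_pos _).trans_le (hsub hy).1
  have hderiv : ∀ y ∈ uIcc x 1, HasDerivAt (fun y => y * F (j + 1) (-Real.log y))
      (-(q (j + 1) y - q j y)) y := by
    intro y hy
    have hy0 := hpos y hy
    refine ((hasDerivAt_id y).mul ((hasDerivAt_F_succ j _).comp y
      (Real.hasDerivAt_log hy0.ne').neg)).congr_deriv ?_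
    simp only [Function.comp_apply, Pi.neg_apply, id]
    rw [q_eq_one_sub_F (hsub hy), ← one_sub_q]
    field_simp
    ring
  have hint : IntervalIntegrable (fun y => -(q (j + 1) y - q j y)) volume x 1 :=
    (((continuousOn_q _).sub (continuousOn_q _)).neg.mono hpos).intervalIntegrable
  have := integral_eq_sub_of_hasDerivAt hderiv hint
  simp only [intervalIntegral.integral_neg, Real.log_one, neg_zero, F_succ_zero, mul_zero] at this
  linarith

theorem q_succ_add_integral {j : ℕ} {x : ℝ} (hx : x ∈ Icc (Real.exp (-θ (j + 1))) 1) :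
    q (j + 1) x + 1 / x * ∫ y in x..1, (q (j + 1) y - q j y) = 1 := by
  have hx0 : x ≠ 0 := ((Real.exp_pos _).trans_le hx.1).ne'
  rw [integral_q_succ_sub_q hx, q_eq_one_sub_F hx]
  field_simp
  ring

end JChoice

theorem exists_dual_thresholds_general (J : ℕ) :
    ∃ (θ : ℕ → ℚ) (q : ℕ → ℝ → ℝ),
      θ 1 = 1 ∧
      (∀ j ∈ Finset.Icc 1 J, 0 < θ j) ∧
      (∀ j : ℕ, 1 ≤ j → j < J → θ j < θ (j + 1)) ∧
      (∀ x : ℝ, q 0 x = 0) ∧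
      (∀ j ∈ Finset.Icc 1 J,
        ContinuousOn (q j) (Set.Ioc 0 1) ∧
        (∀ x ∈ Set.Ioc (0 : ℝ) 1, 0 ≤ q j x) ∧
        (∀ x ∈ Set.Ioc (0 : ℝ) (Real.exp (-(θ j : ℝ))), q j x = 0) ∧
        (∀ x ∈ Set.Icc (Real.exp (-(θ j : ℝ))) 1,
          q j x + (1 / x) * (∫ y in x..(1 : ℝ), (q j y - q (j - 1) y)) = 1)) := by
  open JChoice in
  choose θq hθq using θ_mem_range_ratCast
  refine ⟨θq, q, ?_, fun j hj => ?_, fun j _ _ => ?_, q_zero, fun j hj => ?_⟩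
  · exact_mod_cast (hθq 1).trans θ_one
  · have : θ 0 < θ j := strictMono_θ (Finset.mem_Icc.1 hj).1
    have : (0 : ℝ) < θq j := by rw [hθq]; simpa [θ] using this
    exact_mod_cast this
  · exact_mod_cast (hθq j).trans_lt ((θ_lt_succ j).trans_eq (hθq (j + 1)).symm)
  · obtain ⟨m, rfl⟩ := Nat.exists_eq_add_of_le' (Finset.mem_Icc.1 hj).1
    simp only [hθq, Nat.add_sub_cancel]
    exact ⟨(continuousOn_q _).mono fun x hx => hx.1, fun x _ => q_nonneg _ x,
      fun x hx => q_eq_zero hx.1 hx.2, fun x hx => q_succ_add_integral hx⟩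

/-- Existence of a feasible dual solution of `CD(J)` satisfying the complementary
slackness system: for every `J ≥ 1` there are rationals `0 < θ_1 < ⋯ < θ_J` with
`θ_1 = 1` and continuous functions `q_1, …, q_J` on `(0,1]` such that, with
`t_j = e^(-θ_j)` and `q_0 ≡ 0`, each `q_j` is non-negative, vanishes on `(0,t_j]`,
and satisfies `q_j x + (1/x) ∫_x^1 (q_j - q_(j-1)) = 1` on `[t_j, 1]`. -/
theorem exists_dual_thresholds (J : ℕ) (hJ : 1 ≤ J) :
    ∃ (θ : ℕ → ℚ) (q : ℕ → ℝ → ℝ),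
      θ 1 = 1 ∧
      (∀ j ∈ Finset.Icc 1 J, 0 < θ j) ∧
      (∀ j : ℕ, 1 ≤ j → j < J → θ j < θ (j + 1)) ∧
      (∀ x : ℝ, q 0 x = 0) ∧
      (∀ j ∈ Finset.Icc 1 J,
        ContinuousOn (q j) (Set.Ioc 0 1) ∧
        (∀ x ∈ Set.Ioc (0 : ℝ) 1, 0 ≤ q j x) ∧
        (∀ x ∈ Set.Ioc (0 : ℝ) (Real.exp (-(θ j : ℝ))), q j x = 0) ∧
        (∀ x ∈ Set.Icc (Real.exp (-(θ j : ℝ))) 1,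
          q j x + (1 / x) * (∫ y in x..(1 : ℝ), (q j y - q (j - 1) y)) = 1)) :=
  exists_dual_thresholds_general J
end

section
/- Let J ≥ 1 and let 0 < t_J ≤ t_{J−1} ≤ ... ≤ t_1 ≤ 1. Suppose q_1,...,q_J : (0,1] → ℝ are continuous functions such that, with q_0 ≡ 0, for every j ∈ {1,...,J}: q_j(x) = 0 for x ∈ (0, t_j] and q_j(x) + (1/x)·∫_x^1 [q_j(y) − q_{j−1}(y)] dy = 1 for x ∈ [t_j, 1]. Then ∫_0^1 q_J(y) dy = ∑_{j=1}^J t_j. -/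
/-
Evaluating the slackness equation of `q_j` at its own threshold `x = t_j`, where `q_j` vanishes,
gives `∫_{t_j}^1 (q_j - q_{j-1}) = t_j`. Both `q_j` and `q_{j-1}` vanish on `(0, t_j]`
(as `t_j ≤ t_{j-1}`), so this says `∫_0^1 q_j = ∫_0^1 q_{j-1} + t_j`, and the claim telescopes
from `q_0 ≡ 0`.
-/

open MeasureTheory intervalIntegral Set

theorem antitoneOn_nat_Icc_of_succ_le {α : Type*} [Preorder α] {t : ℕ → α} {J : ℕ}
    (ht : ∀ j : ℕ, 1 ≤ j → j < J → t (j + 1) ≤ t j) : AntitoneOn t (Icc 1 J) := by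
  rintro i ⟨hi, -⟩ j ⟨-, hj⟩ hij
  induction j, hij using Nat.le_induction with
  | base => exact le_rfl
  | succ k hik ih => exact (ht k (hi.trans hik) hj).trans (ih (Nat.le_of_succ_le hj))

theorem eq_sum_Icc_of_eq_add {M : Type*} [AddCommMonoid M] {F t : ℕ → M} {J : ℕ}
    (h0 : F 0 = 0) (hstep : ∀ j ∈ Finset.Icc 1 J, F j = F (j - 1) + t j) :
    F J = ∑ j ∈ Finset.Icc 1 J, t j := by
  induction J with
  | zero => simpa using h0
  | succ J ih =>
    rw [Finset.sum_Icc_succ_top (by omega), hstep (J + 1) (by simp), Nat.add_sub_cancel,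
      ih fun j hj => hstep j (Finset.Icc_subset_Icc_right J.le_succ hj)]

theorem integral_eq_integral_of_eq_zero_on_Ioc {f : ℝ → ℝ} {a b c : ℝ} (hab : a ≤ b)
    (hf : ∀ x ∈ Ioc a b, f x = 0) (hbc : IntervalIntegrable f volume b c) :
    ∫ x in a..c, f x = ∫ x in b..c, f x := by
  have hab_int : IntervalIntegrable f volume a b := by
    rw [intervalIntegrable_iff_integrableOn_Ioc_of_le hab,
      integrableOn_congr_fun hf measurableSet_Ioc]
    exact integrableOn_zero
  have hab_zero : ∫ x in a..b, f x = 0 := by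
    rw [integral_of_le hab, setIntegral_congr_fun measurableSet_Ioc hf, integral_zero]
  rw [← integral_add_adjacent_intervals hab_int hbc, hab_zero, zero_add]

theorem integral_eq_integral_add_of_threshold_eq {f g : ℝ → ℝ} {s : ℝ} (hs : 0 < s)
    (hf : IntervalIntegrable f volume s 1) (hg : IntervalIntegrable g volume s 1)
    (hf0 : ∀ x ∈ Ioc 0 s, f x = 0) (hg0 : ∀ x ∈ Ioc 0 s, g x = 0)
    (h : f s + (1 / s) * ∫ y in s..1, (f y - g y) = 1) :
    ∫ y in (0 : ℝ)..1, f y = (∫ y in (0 : ℝ)..1, g y) + s := by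
  have hdiff : ∫ y in s..1, (f y - g y) = s := by
    rw [hf0 s ⟨hs, le_rfl⟩, zero_add] at h
    field_simp at h
    exact h
  rw [integral_eq_integral_of_eq_zero_on_Ioc hs.le hf0 hf,
    integral_eq_integral_of_eq_zero_on_Ioc hs.le hg0 hg]
  rw [integral_sub hf hg] at hdiff
  linarith

theorem dual_objective_eq_sum_thresholds_general
    (J : ℕ) (t : ℕ → ℝ)
    (htJ : 0 < t J) (ht1 : t 1 ≤ 1)
    (hmono : ∀ j : ℕ, 1 ≤ j → j < J → t (j + 1) ≤ t j)
    (q : ℕ → ℝ → ℝ)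
    (hq0 : ∀ x : ℝ, q 0 x = 0)
    (hcont : ∀ j ∈ Finset.Icc 1 J, ContinuousOn (q j) (Set.Ioc 0 1))
    (hvanish : ∀ j ∈ Finset.Icc 1 J, ∀ x ∈ Set.Ioc (0 : ℝ) (t j), q j x = 0)
    (heq : ∀ j ∈ Finset.Icc 1 J, ∀ x ∈ Set.Icc (t j) 1,
      q j x + (1 / x) * (∫ y in x..(1 : ℝ), (q j y - q (j - 1) y)) = 1) :
    (∫ y in (0 : ℝ)..1, q J y) = ∑ j ∈ Finset.Icc 1 J, t j := by
  have ht := antitoneOn_nat_Icc_of_succ_le hmono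
  refine eq_sum_Icc_of_eq_add (F := fun j => ∫ y in (0 : ℝ)..1, q j y) (by simp [hq0])
    fun j hj => ?_
  obtain ⟨hj1, hjJ⟩ := Finset.mem_Icc.mp hj
  have htj : 0 < t j := htJ.trans_le (ht ⟨hj1, hjJ⟩ ⟨hj1.trans hjJ, le_rfl⟩ hjJ)
  have htj1 : t j ≤ 1 := (ht ⟨le_rfl, hj1.trans hjJ⟩ ⟨hj1, hjJ⟩ hj1).trans ht1
  have hsub : uIcc (t j) 1 ⊆ Ioc 0 1 := by
    rw [uIcc_of_le htj1]
    exact fun x hx => ⟨htj.trans_le hx.1, hx.2⟩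
  have hprev : ContinuousOn (q (j - 1)) (Ioc 0 1) ∧ ∀ x ∈ Ioc 0 (t j), q (j - 1) x = 0 := by
    rcases hj1.eq_or_lt with rfl | hj2
    · exact ⟨continuousOn_const.congr fun x _ => hq0 x, fun x _ => hq0 x⟩
    · have hmem : j - 1 ∈ Finset.Icc 1 J := Finset.mem_Icc.mpr ⟨by omega, by omega⟩
      have htle : t j ≤ t (j - 1) :=
        ht ⟨by omega, by omega⟩ ⟨hj1, hjJ⟩ (Nat.sub_le j 1)
      exact ⟨hcont _ hmem, fun x hx => hvanish _ hmem x ⟨hx.1, hx.2.trans htle⟩⟩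
  exact integral_eq_integral_add_of_threshold_eq htj
    (((hcont j hj).mono hsub).intervalIntegrable) ((hprev.1.mono hsub).intervalIntegrable)
    (hvanish j hj) hprev.2 (heq j hj (t j) ⟨le_rfl, htj1⟩)

/-- The dual objective value of the complementary slackness system with thresholds
`0 < t_J ≤ ⋯ ≤ t_1 ≤ 1`: if continuous functions `q_1, …, q_J` on `(0,1]` (with
`q_0 ≡ 0`) vanish on `(0, t_j]` and satisfy
`q_j x + (1/x) ∫_x^1 (q_j - q_(j-1)) = 1` on `[t_j, 1]`, then
`∫_0^1 q_J = ∑_{j=1}^J t_j`. -/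
theorem dual_objective_eq_sum_thresholds
    (J : ℕ) (hJ : 1 ≤ J) (t : ℕ → ℝ)
    (htJ : 0 < t J) (ht1 : t 1 ≤ 1)
    (hmono : ∀ j : ℕ, 1 ≤ j → j < J → t (j + 1) ≤ t j)
    (q : ℕ → ℝ → ℝ)
    (hq0 : ∀ x : ℝ, q 0 x = 0)
    (hcont : ∀ j ∈ Finset.Icc 1 J, ContinuousOn (q j) (Set.Ioc 0 1))
    (hvanish : ∀ j ∈ Finset.Icc 1 J, ∀ x ∈ Set.Ioc (0 : ℝ) (t j), q j x = 0)
    (heq : ∀ j ∈ Finset.Icc 1 J, ∀ x ∈ Set.Icc (t j) 1,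
      q j x + (1 / x) * (∫ y in x..(1 : ℝ), (q j y - q (j - 1) y)) = 1) :
    (∫ y in (0 : ℝ)..1, q J y) = ∑ j ∈ Finset.Icc 1 J, t j :=
  dual_objective_eq_sum_thresholds_general J t htJ ht1 hmono q hq0 hcont hvanish heq
end

section
/- Define q_1, q_2 : (0,1] → ℝ by q_1(x) := max(0, 1 + ln x), and q_2(x) := 0 for x ∈ (0, e^{−3/2}), q_2(x) := 3/2 + ln x for x ∈ [e^{−3/2}, e^{−1}), and q_2(x) := 1 − (ln x)²/2 for x ∈ [e^{−1}, 1]. Then: (i) q_1, q_2 ≥ 0; (ii) q_1(x) + (1/x)·∫_x^1 q_1(y) dy ≥ 1 for all x ∈ (0,1]; (iii) q_2(x) + (1/x)·∫_x^1 [q_2(y) − q_1(y)] dy ≥ 1 for all x ∈ (0,1], with equality for x ∈ [e^{−3/2}, 1]; and (iv) ∫_0^1 q_2(x) dx = e^{−1} + e^{−3/2}. -/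
/-!
On `(0, 1]` the dual function `q₂` is `max(0, 3/2 + ln x) - q₁²/2`. On each piece cut out by
`e^(-3/2)` and `e^(-1)`, both `q₁` and `q₂ - q₁` are quadratic polynomials in `ln t`, with primitive
`t (α + β (ln t - 1) + γ (ln² t - 2 ln t + 2))`. This gives the tail integrals in closed form:
`∫_x^1 q₁` is `-x ln x` above `e^(-1)` and `e^(-1)` below it, and `∫_x^1 (q₂ - q₁)` is
`x ln² x / 2`, `-x (1/2 + ln x)` and `e^(-3/2)` on the three pieces. Both constraints are then
equalities above the last breakpoint `c`, and below it they reduce to `c / x ≥ 1`.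
-/

open MeasureTheory intervalIntegral Real Set

noncomputable def logQuadPrimitive (α β γ t : ℝ) : ℝ :=
  t * (α + β * (log t - 1) + γ * (log t ^ 2 - 2 * log t + 2))

theorem hasDerivAt_logQuadPrimitive (α β γ : ℝ) {t : ℝ} (ht : t ≠ 0) :
    HasDerivAt (logQuadPrimitive α β γ) (α + β * log t + γ * log t ^ 2) t := by
  have hL := hasDerivAt_log ht
  have h := (hasDerivAt_id' t).mul ((((hL.sub_const 1).const_mul β).const_add α).add
    ((((hL.pow 2).sub (hL.const_mul 2)).add_const 2).const_mul γ))
  refine h.congr_deriv ?_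
  simp only [Pi.add_apply, Pi.sub_apply, Pi.pow_apply]
  field_simp
  ring

theorem pos_of_mem_uIcc {x y t : ℝ} (hx : 0 < x) (hy : 0 < y) (ht : t ∈ uIcc x y) : 0 < t :=
  (lt_min hx hy).trans_le ht.1

theorem integral_eq_logQuadPrimitive_sub {f : ℝ → ℝ} {x y : ℝ} (α β γ : ℝ) (hx : 0 < x)
    (hy : 0 < y) (hf : EqOn f (fun t => α + β * log t + γ * log t ^ 2) (uIcc x y)) :
    ∫ t in x..y, f t = logQuadPrimitive α β γ y - logQuadPrimitive α β γ x := by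
  have hne : ∀ t ∈ uIcc x y, t ≠ 0 := fun t ht => (pos_of_mem_uIcc hx hy ht).ne'
  rw [integral_congr hf]
  exact integral_eq_sub_of_hasDerivAt (fun t ht => hasDerivAt_logQuadPrimitive α β γ (hne t ht))
    (ContinuousOn.intervalIntegrable (by fun_prop (disch := assumption)))

theorem le_log_of_mem_uIcc {c x y t : ℝ} (hx : exp c ≤ x) (hy : exp c ≤ y) (ht : t ∈ uIcc x y) :
    c ≤ log t :=
  have hct : exp c ≤ t := (le_min hx hy).trans ht.1
  (le_log_iff_exp_le ((exp_pos c).trans_le hct)).2 hct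

theorem log_le_of_mem_uIcc {c x y t : ℝ} (hx : 0 < x) (hy : 0 < y) (hxc : x ≤ exp c)
    (hyc : y ≤ exp c) (ht : t ∈ uIcc x y) : log t ≤ c :=
  (log_le_iff_le_exp (pos_of_mem_uIcc hx hy ht)).2 (ht.2.trans (max_le hxc hyc))

noncomputable def dualQ₁ (x : ℝ) : ℝ := max 0 (1 + log x)

-- Since `3/2 + L - (1 + L)^2/2 = 1 - L^2/2`, this is the paper's three-piece `q₂` on `(0, 1]`.
noncomputable def dualQ₂ (x : ℝ) : ℝ := max 0 (3 / 2 + log x) - dualQ₁ x ^ 2 / 2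

theorem dualQ₁_nonneg (x : ℝ) : 0 ≤ dualQ₁ x := le_max_left _ _

theorem dualQ₁_of_log_le {x : ℝ} (h : log x ≤ -1) : dualQ₁ x = 0 :=
  max_eq_left (by linarith)

theorem dualQ₁_of_neg_one_le_log {x : ℝ} (h : -1 ≤ log x) : dualQ₁ x = 1 + log x :=
  max_eq_right (by linarith)

theorem dualQ₂_of_log_le {x : ℝ} (h : log x ≤ -(3 / 2)) : dualQ₂ x = 0 := by
  rw [dualQ₂, dualQ₁_of_log_le (by linarith), max_eq_left (by linarith)]
  ring

theorem dualQ₂_of_log_mem_Icc {x : ℝ} (h₁ : -(3 / 2) ≤ log x) (h₂ : log x ≤ -1) :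
    dualQ₂ x = 3 / 2 + log x := by
  rw [dualQ₂, dualQ₁_of_log_le h₂, max_eq_right (by linarith)]
  ring

theorem dualQ₂_of_neg_one_le_log {x : ℝ} (h : -1 ≤ log x) : dualQ₂ x = 1 - log x ^ 2 / 2 := by
  rw [dualQ₂, dualQ₁_of_neg_one_le_log h, max_eq_right (by linarith)]
  ring

theorem dualQ₂_nonneg {x : ℝ} (hx : log x ≤ 0) : 0 ≤ dualQ₂ x := by
  rcases le_total (log x) (-1) with h | h
  · rw [dualQ₂, dualQ₁_of_log_le h]
    simp
  · rw [dualQ₂_of_neg_one_le_log h]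
    nlinarith

theorem continuousOn_dualQ₁ : ContinuousOn dualQ₁ (Ioi 0) := by
  unfold dualQ₁; fun_prop (disch := exact fun t ht => ne_of_gt ht)

theorem continuousOn_dualQ₂ : ContinuousOn dualQ₂ (Ioi 0) := by
  unfold dualQ₂
  have hlog : ContinuousOn log (Ioi 0) := continuousOn_log.mono fun _ ht => ne_of_gt ht
  exact (continuousOn_const.sup (continuousOn_const.add hlog)).sub
    ((continuousOn_dualQ₁.pow 2).div_const 2)

theorem intervalIntegrable_dualQ₁ {x y : ℝ} (hx : 0 < x) (hy : 0 < y) :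
    IntervalIntegrable dualQ₁ volume x y :=
  (continuousOn_dualQ₁.mono fun _ => pos_of_mem_uIcc hx hy).intervalIntegrable

theorem intervalIntegrable_dualQ₂ {x y : ℝ} (hx : 0 < x) (hy : 0 < y) :
    IntervalIntegrable dualQ₂ volume x y :=
  (continuousOn_dualQ₂.mono fun _ => pos_of_mem_uIcc hx hy).intervalIntegrable

theorem intervalIntegrable_dualQ₂_sub_dualQ₁ {x y : ℝ} (hx : 0 < x) (hy : 0 < y) :
    IntervalIntegrable (fun t => dualQ₂ t - dualQ₁ t) volume x y :=
  (intervalIntegrable_dualQ₂ hx hy).sub (intervalIntegrable_dualQ₁ hx hy)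

theorem exp_neg_one_le_one : exp (-1) ≤ 1 := exp_le_one_iff.2 (by norm_num)

theorem integral_dualQ₁_of_exp_neg_one_le {x : ℝ} (hx : exp (-1) ≤ x) :
    ∫ t in x..1, dualQ₁ t = -(x * log x) := by
  rw [integral_eq_logQuadPrimitive_sub 1 1 0 ((exp_pos _).trans_le hx) one_pos fun t ht => by
    rw [dualQ₁_of_neg_one_le_log (le_log_of_mem_uIcc hx exp_neg_one_le_one ht)]
    ring]
  simp only [logQuadPrimitive, log_one]
  ring

theorem integral_dualQ₁_of_le_exp_neg_one {x : ℝ} (hx₀ : 0 < x) (hx : x ≤ exp (-1)) :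
    ∫ t in x..1, dualQ₁ t = exp (-1) := by
  rw [← integral_add_adjacent_intervals (intervalIntegrable_dualQ₁ hx₀ (exp_pos _))
      (intervalIntegrable_dualQ₁ (exp_pos _) one_pos),
    integral_dualQ₁_of_exp_neg_one_le le_rfl,
    integral_eq_logQuadPrimitive_sub 0 0 0 hx₀ (exp_pos _) fun t ht => by
      rw [dualQ₁_of_log_le (log_le_of_mem_uIcc hx₀ (exp_pos _) hx le_rfl ht)]
      ring]
  simp only [logQuadPrimitive, log_exp]
  ring

theorem exp_neg_three_halves_le_exp_neg_one : exp (-(3 / 2)) ≤ exp (-1) :=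
  exp_le_exp.2 (by norm_num)

theorem integral_dualQ₂_sub_dualQ₁_of_exp_neg_one_le {x : ℝ} (hx : exp (-1) ≤ x) :
    ∫ t in x..1, (dualQ₂ t - dualQ₁ t) = x * log x ^ 2 / 2 := by
  rw [integral_eq_logQuadPrimitive_sub 0 (-1) (-1 / 2) ((exp_pos _).trans_le hx) one_pos
    fun t ht => by
      have h := le_log_of_mem_uIcc hx exp_neg_one_le_one ht
      simp only [dualQ₂_of_neg_one_le_log h, dualQ₁_of_neg_one_le_log h]
      ring]
  simp only [logQuadPrimitive, log_one]
  ring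

theorem integral_dualQ₂_sub_dualQ₁_of_mem_Icc {x : ℝ} (hx : exp (-(3 / 2)) ≤ x)
    (hxb : x ≤ exp (-1)) :
    ∫ t in x..1, (dualQ₂ t - dualQ₁ t) = -(x * (1 / 2 + log x)) := by
  have hx₀ : 0 < x := (exp_pos _).trans_le hx
  rw [← integral_add_adjacent_intervals (intervalIntegrable_dualQ₂_sub_dualQ₁ hx₀ (exp_pos _))
      (intervalIntegrable_dualQ₂_sub_dualQ₁ (exp_pos _) one_pos),
    integral_dualQ₂_sub_dualQ₁_of_exp_neg_one_le le_rfl,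
    integral_eq_logQuadPrimitive_sub (3 / 2) 1 0 hx₀ (exp_pos _) fun t ht => by
      have h₁ := le_log_of_mem_uIcc hx exp_neg_three_halves_le_exp_neg_one ht
      have h₂ := log_le_of_mem_uIcc hx₀ (exp_pos _) hxb le_rfl ht
      simp only [dualQ₂_of_log_mem_Icc h₁ h₂, dualQ₁_of_log_le h₂]
      ring]
  simp only [logQuadPrimitive, log_exp]
  ring

theorem integral_dualQ₂_sub_dualQ₁_of_le_exp_neg_three_halves {x : ℝ} (hx₀ : 0 < x)
    (hx : x ≤ exp (-(3 / 2))) :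
    ∫ t in x..1, (dualQ₂ t - dualQ₁ t) = exp (-(3 / 2)) := by
  rw [← integral_add_adjacent_intervals (intervalIntegrable_dualQ₂_sub_dualQ₁ hx₀ (exp_pos _))
      (intervalIntegrable_dualQ₂_sub_dualQ₁ (exp_pos _) one_pos),
    integral_dualQ₂_sub_dualQ₁_of_mem_Icc le_rfl exp_neg_three_halves_le_exp_neg_one,
    integral_eq_logQuadPrimitive_sub 0 0 0 hx₀ (exp_pos _) fun t ht => by
      have h := log_le_of_mem_uIcc hx₀ (exp_pos _) hx le_rfl ht
      simp only [dualQ₂_of_log_le h, dualQ₁_of_log_le (h.trans (by norm_num))]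
      ring]
  simp only [logQuadPrimitive, log_exp]
  ring

theorem integral_dualQ₂ : ∫ t in (0 : ℝ)..1, dualQ₂ t = exp (-1) + exp (-(3 / 2)) := by
  have ha := exp_pos (-(3 / 2))
  have hb := exp_pos (-1)
  have hzero : EqOn (fun _ => (0 : ℝ)) dualQ₂ (uIoo 0 (exp (-(3 / 2)))) := fun t ht => by
    rw [uIoo_of_le ha.le] at ht
    exact (dualQ₂_of_log_le ((log_le_iff_le_exp ht.1).2 ht.2.le)).symm
  rw [← integral_add_adjacent_intervals (intervalIntegrable_const.congr_uIoo hzero)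
      (intervalIntegrable_dualQ₂ ha one_pos),
    ← integral_add_adjacent_intervals (intervalIntegrable_dualQ₂ ha hb)
      (intervalIntegrable_dualQ₂ hb one_pos),
    ← integral_congr_uIoo hzero, intervalIntegral.integral_zero,
    integral_eq_logQuadPrimitive_sub (3 / 2) 1 0 ha hb fun t ht => by
      rw [dualQ₂_of_log_mem_Icc (le_log_of_mem_uIcc le_rfl exp_neg_three_halves_le_exp_neg_one ht)
        (log_le_of_mem_uIcc ha hb exp_neg_three_halves_le_exp_neg_one le_rfl ht)]
      ring,
    integral_eq_logQuadPrimitive_sub 1 0 (-1 / 2) hb one_pos fun t ht => by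
      rw [dualQ₂_of_neg_one_le_log (le_log_of_mem_uIcc le_rfl exp_neg_one_le_one ht)]
      ring]
  simp only [logQuadPrimitive, log_exp, log_one]
  ring

theorem one_le_dualQ₁_add_integral {x : ℝ} (hx : 0 < x) :
    1 ≤ dualQ₁ x + (1 / x) * ∫ y in x..1, dualQ₁ y := by
  rcases le_total (exp (-1)) x with h | h
  · rw [dualQ₁_of_neg_one_le_log ((le_log_iff_exp_le hx).2 h), integral_dualQ₁_of_exp_neg_one_le h]
    field_simp
    linarith
  · rw [dualQ₁_of_log_le ((log_le_iff_le_exp hx).2 h), integral_dualQ₁_of_le_exp_neg_one hx h,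
      zero_add, one_div_mul_eq_div, one_le_div hx]
    exact h

theorem dualQ₂_add_integral_eq_one {x : ℝ} (hx : exp (-(3 / 2)) ≤ x) :
    dualQ₂ x + (1 / x) * ∫ y in x..1, (dualQ₂ y - dualQ₁ y) = 1 := by
  have hx₀ : 0 < x := (exp_pos _).trans_le hx
  have ha : -(3 / 2) ≤ log x := (le_log_iff_exp_le hx₀).2 hx
  rcases le_total x (exp (-1)) with h | h
  · rw [dualQ₂_of_log_mem_Icc ha ((log_le_iff_le_exp hx₀).2 h),
      integral_dualQ₂_sub_dualQ₁_of_mem_Icc hx h]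
    field_simp
    ring
  · rw [dualQ₂_of_neg_one_le_log ((le_log_iff_exp_le hx₀).2 h),
      integral_dualQ₂_sub_dualQ₁_of_exp_neg_one_le h]
    field_simp
    ring

theorem one_le_dualQ₂_add_integral {x : ℝ} (hx : 0 < x) :
    1 ≤ dualQ₂ x + (1 / x) * ∫ y in x..1, (dualQ₂ y - dualQ₁ y) := by
  rcases le_total x (exp (-(3 / 2))) with h | h
  · rw [dualQ₂_of_log_le ((log_le_iff_le_exp hx).2 h),
      integral_dualQ₂_sub_dualQ₁_of_le_exp_neg_three_halves hx h,
      zero_add, one_div_mul_eq_div, one_le_div hx]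
    exact h
  · exact (dualQ₂_add_integral_eq_one h).ge

theorem eqOn_dualQ₂ {q₂ : ℝ → ℝ}
    (h₀ : ∀ x ∈ Ioo (0 : ℝ) (exp (-(3 / 2 : ℝ))), q₂ x = 0)
    (h₁ : ∀ x ∈ Ico (exp (-(3 / 2 : ℝ))) (exp (-1)), q₂ x = 3 / 2 + log x)
    (h₂ : ∀ x ∈ Icc (exp (-1 : ℝ)) 1, q₂ x = 1 - log x ^ 2 / 2) :
    EqOn q₂ dualQ₂ (Ioc 0 1) := by
  intro x ⟨hx₀, hx₁⟩
  rcases lt_or_ge x (exp (-(3 / 2))) with ha | ha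
  · rw [h₀ x ⟨hx₀, ha⟩, dualQ₂_of_log_le ((log_le_iff_le_exp hx₀).2 ha.le)]
  rcases lt_or_ge x (exp (-1)) with hb | hb
  · rw [h₁ x ⟨ha, hb⟩, dualQ₂_of_log_mem_Icc ((le_log_iff_exp_le hx₀).2 ha)
      ((log_le_iff_le_exp hx₀).2 hb.le)]
  · rw [h₂ x ⟨hb, hx₁⟩, dualQ₂_of_neg_one_le_log ((le_log_iff_exp_le hx₀).2 hb)]

/-- The optimal dual solution `(q_1, q_2)` of the continuous LP dual `CD(2)` for the
2-choice secretary problem: `q_1(x) = max(0, 1 + ln x)`; `q_2` vanishes on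
`(0, e^(-3/2))`, equals `3/2 + ln x` on `[e^(-3/2), e^(-1))` and `1 - (ln x)²/2` on
`[e^(-1), 1]`.  Both are non-negative, feasible for `CD(2)` (with equality in the
second constraint on `[e^(-3/2), 1]`), and `∫_0^1 q_2 = e^(-1) + e^(-3/2)`. -/
theorem optimal_dual_CD2
    (q₁ q₂ : ℝ → ℝ)
    (hq₁ : ∀ x : ℝ, q₁ x = max 0 (1 + Real.log x))
    (hq₂a : ∀ x ∈ Set.Ioo (0 : ℝ) (Real.exp (-(3 / 2 : ℝ))), q₂ x = 0)
    (hq₂b : ∀ x ∈ Set.Ico (Real.exp (-(3 / 2 : ℝ))) (Real.exp (-1)),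
      q₂ x = 3 / 2 + Real.log x)
    (hq₂c : ∀ x ∈ Set.Icc (Real.exp (-1 : ℝ)) 1, q₂ x = 1 - (Real.log x) ^ 2 / 2) :
    (∀ x ∈ Set.Ioc (0 : ℝ) 1, 0 ≤ q₁ x ∧ 0 ≤ q₂ x) ∧
    (∀ x ∈ Set.Ioc (0 : ℝ) 1, 1 ≤ q₁ x + (1 / x) * ∫ y in x..(1 : ℝ), q₁ y) ∧
    (∀ x ∈ Set.Ioc (0 : ℝ) 1,
      1 ≤ q₂ x + (1 / x) * ∫ y in x..(1 : ℝ), (q₂ y - q₁ y)) ∧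
    (∀ x ∈ Set.Icc (Real.exp (-(3 / 2 : ℝ))) 1,
      q₂ x + (1 / x) * (∫ y in x..(1 : ℝ), (q₂ y - q₁ y)) = 1) ∧
    (∫ x in (0 : ℝ)..1, q₂ x) = Real.exp (-1) + Real.exp (-(3 / 2 : ℝ)) := by
  obtain rfl : q₁ = dualQ₁ := funext hq₁
  have hq₂ := eqOn_dualQ₂ hq₂a hq₂b hq₂c
  have htail {x : ℝ} (hx : x ∈ Ioc 0 1) :
      ∫ y in x..1, (q₂ y - dualQ₁ y) = ∫ y in x..1, (dualQ₂ y - dualQ₁ y) :=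
    integral_congr fun y hy => by
      rw [uIcc_of_le hx.2] at hy
      rw [hq₂ ⟨hx.1.trans_le hy.1, hy.2⟩]
  refine ⟨fun x hx => ⟨dualQ₁_nonneg x, hq₂ hx ▸ dualQ₂_nonneg (log_nonpos hx.1.le hx.2)⟩,
    fun x hx => one_le_dualQ₁_add_integral hx.1, fun x hx => ?_, fun x hx => ?_, ?_⟩
  · rw [hq₂ hx, htail hx]
    exact one_le_dualQ₂_add_integral hx.1
  · have hx' : x ∈ Ioc 0 1 := ⟨(exp_pos _).trans_le hx.1, hx.2⟩
    rw [hq₂ hx', htail hx']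
    exact dualQ₂_add_integral_eq_one hx.1
  · rw [integral_congr_Ioo_of_le zero_le_one (hq₂.mono Ioo_subset_Ioc_self), integral_dualQ₂]
end

section
/- Let K ≥ 1 and n, i, m, k, ℓ be integers with 1 ≤ k ≤ ℓ ≤ K, 1 ≤ i < n − K, and K ≤ m ≤ n − i. Then, as real numbers, C(n−i−m, ℓ−k)·C(i+m−1, k−1) ≥ (1 − 2Km/(n−i)) · C(n−i, ℓ−k)·C(i−1, k−1), where C denotes the binomial coefficient (with C(a,b) = 0 when b > a ≥ 0). -/
private lemma tele_choose (a : ℕ) : ∀ m N : ℕ, m ≤ N →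
    N.choose (a+1) ≤ (N-m).choose (a+1) + m * (N-1).choose a := by
  intro m
  induction m with
  | zero => intro N h; simp
  | succ m ih =>
    intro N h
    have hmN : m ≤ N := by omega
    have h1 := ih N hmN
    obtain ⟨s, hs⟩ : ∃ s, N - m = s + 1 := ⟨N - (m+1), by omega⟩
    have h2 : (N - m).choose (a+1) = s.choose (a+1) + s.choose a := by
      rw [hs, Nat.choose_succ_succ']; ring
    have h3 : s.choose a ≤ (N-1).choose a := Nat.choose_le_choose _ (by omega)
    have h4 : s.choose (a+1) = (N - (m+1)).choose (a+1) := by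
      congr 1; omega
    calc N.choose (a+1) ≤ (N-m).choose (a+1) + m * (N-1).choose a := h1
      _ = s.choose (a+1) + s.choose a + m * (N-1).choose a := by rw [h2]
      _ ≤ (N - (m+1)).choose (a+1) + (N-1).choose a + m * (N-1).choose a := by
          rw [h4]; omega
      _ = (N - (m+1)).choose (a+1) + (m+1) * (N-1).choose a := by ring

private lemma step2 (K N m a : ℕ) (hN : 0 < N) (hm : m ≤ N) (ha : a ≤ K) :
    (1 - 2*(K:ℝ)*m/N) * (N.choose a) ≤ ((N-m).choose a) := by
  have ht : 0 ≤ 2*(K:ℝ)*m/N := by positivity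
  cases a with
  | zero =>
    simp only [Nat.choose_zero_right, Nat.cast_one, mul_one]
    linarith
  | succ a' =>
    have hK' : a' + 1 ≤ K := ha
    -- telescoping bound
    have h1 : (N.choose (a'+1) : ℝ) ≤ ((N-m).choose (a'+1) : ℝ)
        + m * ((N-1).choose a' : ℝ) := by
      exact_mod_cast Nat.cast_le.mpr (tele_choose a' m N hm)
    -- identity N * C(N-1,a') = C(N,a'+1) * (a'+1)
    have h2 : (N : ℕ) * (N-1).choose a' = N.choose (a'+1) * (a'+1) := by
      have hs : N - 1 + 1 = N := by omega
      rw [← hs]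
      exact Nat.add_one_mul_choose_eq (N-1) a'
    have h2' : (N : ℝ) * ((N-1).choose a' : ℝ) = (N.choose (a'+1) : ℝ) * (a'+1) := by
      exact_mod_cast congrArg (Nat.cast : ℕ → ℝ) h2
    have hNpos : (0:ℝ) < N := by exact_mod_cast hN
    -- m * C(N-1,a') ≤ (2Km/N) * C(N,a'+1)
    have h3 : (m : ℝ) * ((N-1).choose a' : ℝ)
        ≤ 2*(K:ℝ)*m/N * (N.choose (a'+1) : ℝ) := by
      rw [div_mul_eq_mul_div, le_div_iff₀ hNpos]
      have : (m : ℝ) * ((N-1).choose a' : ℝ) * N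
          = (m : ℝ) * ((N.choose (a'+1) : ℝ) * (a'+1)) := by
        rw [← h2']; ring
      rw [this]
      have hc : (0:ℝ) ≤ (N.choose (a'+1) : ℝ) := Nat.cast_nonneg _
      have hm0 : (0:ℝ) ≤ (m:ℝ) := Nat.cast_nonneg _
      have haK : ((a':ℝ) + 1) ≤ 2*(K:ℝ) := by
        have : (a':ℝ) + 1 ≤ (K:ℝ) := by exact_mod_cast hK'
        have hK0 : (1:ℝ) ≤ (K:ℝ) := by
          exact_mod_cast Nat.one_le_iff_ne_zero.mpr (by omega)
        linarith
      nlinarith [mul_nonneg hm0 hc]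
    nlinarith [h1, h3]

/-- The binomial estimate controlling the change of the finite-LP objective
coefficients of the `(J,K)`-secretary problem under a shift by `m` positions:
for `1 ≤ k ≤ ℓ ≤ K`, `1 ≤ i < n - K` and `K ≤ m ≤ n - i`, as real numbers,
`C(n-i-m, ℓ-k) C(i+m-1, k-1) ≥ (1 - 2Km/(n-i)) C(n-i, ℓ-k) C(i-1, k-1)`. -/
theorem binomial_shift_estimate
    (K n i m k ℓ : ℕ) (hK : 1 ≤ K)
    (hk : 1 ≤ k) (hkℓ : k ≤ ℓ) (hℓK : ℓ ≤ K)
    (hi : 1 ≤ i) (hin : i + K < n)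
    (hKm : K ≤ m) (hmn : m + i ≤ n) :
    (1 - 2 * (K : ℝ) * m / ((n : ℝ) - i)) *
        (((n - i).choose (ℓ - k) : ℝ) * ((i - 1).choose (k - 1) : ℝ))
      ≤ ((n - i - m).choose (ℓ - k) : ℝ) * ((i + m - 1).choose (k - 1) : ℝ) := by
  set N := n - i with hN
  have hNcast : ((n : ℝ) - i) = (N : ℝ) := by
    rw [hN, Nat.cast_sub (by omega)]
  have hNpos : 0 < N := by omega
  have hmN : m ≤ N := by omega
  have haK : ℓ - k ≤ K := by omega
  have h2 := step2 K N m (ℓ - k) hNpos hmN haK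
  have hb : ((i - 1).choose (k - 1) : ℝ) ≤ ((i + m - 1).choose (k - 1) : ℝ) := by
    exact_mod_cast Nat.choose_le_choose _ (by omega : i - 1 ≤ i + m - 1)
  rw [hNcast]
  set t := 2 * (K : ℝ) * m / (N : ℝ) with htdef
  rcases le_or_gt (1 - t) 0 with hle | hpos
  · have : (1 - t) * (((N).choose (ℓ - k) : ℝ) * ((i - 1).choose (k - 1) : ℝ)) ≤ 0 :=
      mul_nonpos_of_nonpos_of_nonneg hle (by positivity)
    calc _ ≤ (0:ℝ) := this
      _ ≤ _ := by positivity
  · have h0 : (0:ℝ) ≤ (1 - t) * ((N).choose (ℓ - k) : ℝ) :=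
      mul_nonneg (le_of_lt hpos) (Nat.cast_nonneg _)
    calc (1 - t) * (((N).choose (ℓ - k) : ℝ) * ((i - 1).choose (k - 1) : ℝ))
        = ((1 - t) * ((N).choose (ℓ - k) : ℝ)) * ((i - 1).choose (k - 1) : ℝ) := by ring
      _ ≤ ((N - m).choose (ℓ - k) : ℝ) * ((i + m - 1).choose (k - 1) : ℝ) :=
          mul_le_mul h2 hb (Nat.cast_nonneg _) (Nat.cast_nonneg _)
end

section
/- Let τ ∈ (0,1) be the unique solution of x·e^{1−x} = 2/3 in (0,1). Define q_1, q_2 : (0,1] → ℝ by: q_1(x) := 0 for x ∈ (0, τ), q_1(x) := 2·ln(3x/2) − 2x + 2 for x ∈ [τ, 2/3), q_1(x) := x for x ∈ [2/3, 1]; and q_2(x) := 0 for x ∈ (0, 2/3), q_2(x) := 3x − 2 for x ∈ [2/3, 1]. Then: (i) q_1, q_2 ≥ 0; (ii) for all x ∈ (0,1], q_1(x) + (1/x)·∫_x^1 [q_1(y) + q_2(y)] dy ≥ 2 − x, with equality for x ∈ [τ, 1]; (iii) for all x ∈ (0,1], q_2(x) + (1/x)·∫_x^1 [q_1(y) + q_2(y)]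 dy ≥ x, with equality for x ∈ [2/3, 1]; and (iv) ∫_0^1 [q_1(x) + q_2(x)] dx = 2τ − τ². -/
/-!
Write `s = q₁ + q₂`. On `[2/3, 1]` we have `s = 4y - 2`, on `[τ, 2/3]` we have
`s = 2 log (3y/2) - 2y + 2`, whose primitive is `2y log (3y/2) - y²`, and `s = 0` below `τ`. Hence the
tail `T(x) = ∫_x^1 s` is `2x - 2x²`, `x² - 2x log (3x/2)` and the constant `T(τ)` on the three
pieces. The equation for `τ` is exactly `log (3τ/2) = τ - 1`, which makes `T(τ) = 2τ - τ²`. The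
constraints then become elementary inequalities, the only transcendental one being
`log t ≥ 1 - 1/t`.
-/

open MeasureTheory intervalIntegral Real Set

theorem lt_two_thirds_of_mul_exp_one_sub_eq {τ : ℝ} (hτ1 : τ < 1)
    (hτ : τ * exp (1 - τ) = 2 / 3) : τ < 2 / 3 := by
  by_contra! h
  nlinarith [add_one_le_exp (1 - τ)]

theorem log_three_mul_div_two_eq {τ : ℝ} (hτ : τ * exp (1 - τ) = 2 / 3) :
    log (3 * τ / 2) = τ - 1 := by
  have hexp : 3 * τ / 2 = exp (τ - 1) := by
    rw [show τ - 1 = -(1 - τ) by ring, exp_neg]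
    exact eq_inv_of_mul_eq_one_left (by linear_combination 3 / 2 * hτ)
  rw [hexp, log_exp]

theorem two_mul_log_sub_two_mul_add_two_nonneg {τ x : ℝ} (hτ0 : 0 < τ)
    (hlog : log (3 * τ / 2) = τ - 1) (hτx : τ ≤ x) (hx1 : x ≤ 1) :
    0 ≤ 2 * log (3 * x / 2) - 2 * x + 2 := by
  have hx0 : 0 < x := hτ0.trans_le hτx
  have hsplit : log (3 * x / 2) = τ - 1 + log (x / τ) := by
    rw [← hlog, ← log_mul (by positivity) (by positivity)]
    field_simp
  have hlog_ge : 1 - τ / x ≤ log (x / τ) := by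
    simpa using one_sub_inv_le_log_of_pos (div_pos hx0 hτ0)
  have hkey : 0 ≤ 1 - τ / x + τ - x := by
    rw [show 1 - τ / x + τ - x = (x - τ) * (1 - x) / x by field_simp; ring]
    exact div_nonneg (mul_nonneg (by linarith) (by linarith)) hx0.le
  linarith

theorem hasDerivAt_two_mul_mul_log_sub_sq {y : ℝ} (hy : 0 < y) :
    HasDerivAt (fun y => 2 * y * log (3 * y / 2) - y ^ 2)
      (2 * log (3 * y / 2) - 2 * y + 2) y := by
  have hlog : HasDerivAt (fun y => log (3 * y / 2)) y⁻¹ y := by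
    convert (((hasDerivAt_id' y).const_mul 3).div_const 2).log (by positivity) using 1
    field_simp
  exact (((hasDerivAt_id' y).const_mul 2).mul hlog).sub (hasDerivAt_pow 2 y)
    |>.congr_deriv (by field_simp; ring)

theorem continuousOn_two_mul_log_sub_two_mul_add_two {a b : ℝ} (ha : 0 < a) :
    ContinuousOn (fun y => 2 * log (3 * y / 2) - 2 * y + 2) (Icc a b) := by
  have : ∀ y ∈ Icc a b, 3 * y / 2 ≠ 0 := fun y hy => by linarith [hy.1]
  fun_prop (disch := assumption)

theorem intervalIntegrable_of_eqOn_Ioo {f g : ℝ → ℝ} {a b : ℝ} (hab : a ≤ b)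
    (hfg : EqOn f g (Ioo a b)) (hg : ContinuousOn g (Icc a b)) :
    IntervalIntegrable f volume a b :=
  (hg.intervalIntegrable_of_Icc hab).congr_uIoo (by rw [uIoo_of_le hab]; exact hfg.symm)

theorem integral_eq_sub_of_eqOn_Ioo {f g F : ℝ → ℝ} {a b : ℝ} (hab : a ≤ b)
    (hfg : EqOn f g (Ioo a b)) (hF : ∀ x ∈ Icc a b, HasDerivAt F (g x) x)
    (hg : ContinuousOn g (Icc a b)) : ∫ x in a..b, f x = F b - F a := by
  rw [integral_congr_Ioo_of_le hab hfg]
  exact integral_eq_sub_of_hasDerivAt (by rwa [uIcc_of_le hab])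
    (hg.intervalIntegrable_of_Icc hab)

structure CD12Dual (τ : ℝ) (q₁ q₂ : ℝ → ℝ) : Prop where
  mem_Ioo : τ ∈ Set.Ioo (0 : ℝ) 1
  mul_exp_eq : τ * Real.exp (1 - τ) = 2 / 3
  q₁_of_lt : ∀ x ∈ Set.Ioo (0 : ℝ) τ, q₁ x = 0
  q₁_of_mem_Ico : ∀ x ∈ Set.Ico τ (2 / 3 : ℝ), q₁ x = 2 * Real.log (3 * x / 2) - 2 * x + 2
  q₁_of_two_thirds_le : ∀ x ∈ Set.Icc (2 / 3 : ℝ) 1, q₁ x = x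
  q₂_of_lt : ∀ x ∈ Set.Ioo (0 : ℝ) (2 / 3 : ℝ), q₂ x = 0
  q₂_of_two_thirds_le : ∀ x ∈ Set.Icc (2 / 3 : ℝ) 1, q₂ x = 3 * x - 2

namespace CD12Dual

variable {τ : ℝ} {q₁ q₂ : ℝ → ℝ}

theorem lt_two_thirds (h : CD12Dual τ q₁ q₂) : τ < 2 / 3 :=
  lt_two_thirds_of_mul_exp_one_sub_eq h.mem_Ioo.2 h.mul_exp_eq

theorem add_eqOn_Ioo_zero (h : CD12Dual τ q₁ q₂) :
    EqOn (fun y => q₁ y + q₂ y) 0 (Ioo 0 τ) := fun y hy => by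
  simp [h.q₁_of_lt y hy, h.q₂_of_lt y ⟨hy.1, hy.2.trans h.lt_two_thirds⟩]

theorem add_eqOn_Ioo_log (h : CD12Dual τ q₁ q₂) :
    EqOn (fun y => q₁ y + q₂ y) (fun y => 2 * log (3 * y / 2) - 2 * y + 2) (Ioo τ (2 / 3)) :=
  fun y hy => by
    simp [h.q₁_of_mem_Ico y (Ioo_subset_Ico_self hy),
      h.q₂_of_lt y ⟨h.mem_Ioo.1.trans hy.1, hy.2⟩]

theorem add_eqOn_Ioo_linear (h : CD12Dual τ q₁ q₂) :
    EqOn (fun y => q₁ y + q₂ y) (fun y => 4 * y - 2) (Ioo (2 / 3) 1) := fun y hy => by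
  simp only [h.q₁_of_two_thirds_le y (Ioo_subset_Icc_self hy),
    h.q₂_of_two_thirds_le y (Ioo_subset_Icc_self hy)]
  ring

theorem intervalIntegrable_of_two_thirds_le (h : CD12Dual τ q₁ q₂) :
    IntervalIntegrable (fun y => q₁ y + q₂ y) volume (2 / 3) 1 :=
  intervalIntegrable_of_eqOn_Ioo (by norm_num) h.add_eqOn_Ioo_linear (by fun_prop)

theorem intervalIntegrable_of_tau_le (h : CD12Dual τ q₁ q₂) {x : ℝ} (hτx : τ ≤ x)
    (hx : x ≤ 2 / 3) : IntervalIntegrable (fun y => q₁ y + q₂ y) volume x (2 / 3) :=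
  intervalIntegrable_of_eqOn_Ioo hx (h.add_eqOn_Ioo_log.mono (Ioo_subset_Ioo_left hτx))
    (continuousOn_two_mul_log_sub_two_mul_add_two (h.mem_Ioo.1.trans_le hτx))

theorem intervalIntegrable_of_le_tau (h : CD12Dual τ q₁ q₂) {x : ℝ} (hx0 : 0 ≤ x)
    (hxτ : x ≤ τ) : IntervalIntegrable (fun y => q₁ y + q₂ y) volume x τ :=
  intervalIntegrable_of_eqOn_Ioo hxτ (h.add_eqOn_Ioo_zero.mono (Ioo_subset_Ioo_left hx0))
    continuousOn_const

theorem integral_of_two_thirds_le (h : CD12Dual τ q₁ q₂) {x : ℝ} (hx : 2 / 3 ≤ x)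
    (hx1 : x ≤ 1) : ∫ y in x..1, (q₁ y + q₂ y) = 2 * x - 2 * x ^ 2 := by
  have hF (y : ℝ) : HasDerivAt (fun y => 2 * y ^ 2 - 2 * y) (4 * y - 2) y :=
    ((hasDerivAt_pow 2 y).const_mul 2).sub ((hasDerivAt_id' y).const_mul 2)
      |>.congr_deriv (by ring)
  rw [integral_eq_sub_of_eqOn_Ioo hx1 (h.add_eqOn_Ioo_linear.mono (Ioo_subset_Ioo_left hx))
    (fun y _ => hF y) (by fun_prop)]
  ring

theorem integral_of_tau_le (h : CD12Dual τ q₁ q₂) {x : ℝ} (hτx : τ ≤ x) (hx : x ≤ 2 / 3) :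
    ∫ y in x..1, (q₁ y + q₂ y) = x ^ 2 - 2 * x * log (3 * x / 2) := by
  have hx0 : 0 < x := h.mem_Ioo.1.trans_le hτx
  rw [← integral_add_adjacent_intervals (h.intervalIntegrable_of_tau_le hτx hx)
      h.intervalIntegrable_of_two_thirds_le,
    h.integral_of_two_thirds_le le_rfl (by norm_num),
    integral_eq_sub_of_eqOn_Ioo hx (h.add_eqOn_Ioo_log.mono (Ioo_subset_Ioo_left hτx))
      (fun y hy => hasDerivAt_two_mul_mul_log_sub_sq (hx0.trans_le hy.1))
      (continuousOn_two_mul_log_sub_two_mul_add_two hx0),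
    show (3 : ℝ) * (2 / 3) / 2 = 1 by norm_num, log_one]
  ring

theorem integral_of_le_tau (h : CD12Dual τ q₁ q₂) {x : ℝ} (hx0 : 0 ≤ x) (hxτ : x ≤ τ) :
    ∫ y in x..1, (q₁ y + q₂ y) = 2 * τ - τ ^ 2 := by
  have hτ23 := h.lt_two_thirds.le
  rw [← integral_add_adjacent_intervals (h.intervalIntegrable_of_le_tau hx0 hxτ)
      ((h.intervalIntegrable_of_tau_le le_rfl hτ23).trans h.intervalIntegrable_of_two_thirds_le),
    integral_congr_Ioo_of_le hxτ (h.add_eqOn_Ioo_zero.mono (Ioo_subset_Ioo_left hx0)),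
    h.integral_of_tau_le le_rfl hτ23, log_three_mul_div_two_eq h.mul_exp_eq]
  simp only [Pi.zero_apply, intervalIntegral.integral_zero]
  ring

theorem nonneg (h : CD12Dual τ q₁ q₂) : ∀ x ∈ Ioc (0 : ℝ) 1, 0 ≤ q₁ x ∧ 0 ≤ q₂ x := by
  rintro x ⟨hx0, hx1⟩
  constructor
  · rcases lt_or_ge x τ with hxτ | hτx
    · exact (h.q₁_of_lt x ⟨hx0, hxτ⟩).ge
    rcases lt_or_ge x (2 / 3) with hx | hx
    · rw [h.q₁_of_mem_Ico x ⟨hτx, hx⟩]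
      exact two_mul_log_sub_two_mul_add_two_nonneg h.mem_Ioo.1
        (log_three_mul_div_two_eq h.mul_exp_eq) hτx hx1
    · rw [h.q₁_of_two_thirds_le x ⟨hx, hx1⟩]
      exact hx0.le
  · rcases lt_or_ge x (2 / 3) with hx | hx
    · exact (h.q₂_of_lt x ⟨hx0, hx⟩).ge
    · rw [h.q₂_of_two_thirds_le x ⟨hx, hx1⟩]
      linarith

theorem constraint_one_eq (h : CD12Dual τ q₁ q₂) :
    ∀ x ∈ Icc τ 1, q₁ x + 1 / x * ∫ y in x..1, (q₁ y + q₂ y) = 2 - x := by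
  rintro x ⟨hτx, hx1⟩
  have hx0 : 0 < x := h.mem_Ioo.1.trans_le hτx
  rcases lt_or_ge x (2 / 3) with hx | hx
  · rw [h.q₁_of_mem_Ico x ⟨hτx, hx⟩, h.integral_of_tau_le hτx hx.le]
    field_simp
    ring
  · rw [h.q₁_of_two_thirds_le x ⟨hx, hx1⟩, h.integral_of_two_thirds_le hx hx1]
    field_simp
    ring

theorem constraint_one_le (h : CD12Dual τ q₁ q₂) :
    ∀ x ∈ Ioc 0 1, 2 - x ≤ q₁ x + 1 / x * ∫ y in x..1, (q₁ y + q₂ y) := by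
  rintro x ⟨hx0, hx1⟩
  rcases lt_or_ge x τ with hxτ | hτx
  · rw [h.q₁_of_lt x ⟨hx0, hxτ⟩, h.integral_of_le_tau hx0.le hxτ.le, zero_add,
      one_div_mul_eq_div, le_div_iff₀ hx0]
    nlinarith [h.mem_Ioo.2]
  · exact (h.constraint_one_eq x ⟨hτx, hx1⟩).ge

theorem constraint_two_eq (h : CD12Dual τ q₁ q₂) :
    ∀ x ∈ Icc (2 / 3) 1, q₂ x + 1 / x * ∫ y in x..1, (q₁ y + q₂ y) = x := by
  rintro x ⟨hx, hx1⟩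
  have hx0 : 0 < x := by linarith
  rw [h.q₂_of_two_thirds_le x ⟨hx, hx1⟩, h.integral_of_two_thirds_le hx hx1]
  field_simp
  ring

theorem constraint_two_le (h : CD12Dual τ q₁ q₂) :
    ∀ x ∈ Ioc 0 1, x ≤ q₂ x + 1 / x * ∫ y in x..1, (q₁ y + q₂ y) := by
  rintro x ⟨hx0, hx1⟩
  rcases lt_or_ge x (2 / 3) with hx | hx
  · rw [h.q₂_of_lt x ⟨hx0, hx⟩, zero_add]
    rcases lt_or_ge x τ with hxτ | hτx
    · rw [h.integral_of_le_tau hx0.le hxτ.le, one_div_mul_eq_div, le_div_iff₀ hx0]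
      nlinarith [h.mem_Ioo.2]
    · have hlog : log (3 * x / 2) ≤ 0 := log_nonpos (by positivity) (by linarith)
      rw [h.integral_of_tau_le hτx hx.le,
        show 1 / x * (x ^ 2 - 2 * x * log (3 * x / 2)) = x - 2 * log (3 * x / 2) by
          field_simp]
      linarith
  · exact (h.constraint_two_eq x ⟨hx, hx1⟩).ge

end CD12Dual

/-- The optimal dual solution `(q_1, q_2)` of the continuous LP dual `CD(1,2)` for the
1-choice 2-best secretary problem, where `τ = -W(-2/(3e))` is the unique solution in
`(0,1)` of `x e^(1-x) = 2/3`: the constraints `q_k(x) + (1/x)∫_x^1 (q_1+q_2) ≥ α_k(x)`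
hold for `α_1(x) = 2 - x` and `α_2(x) = x` (with equality on `[τ,1]` resp. `[2/3,1]`),
and the objective `∫_0^1 (q_1+q_2)` equals the optimal payoff `2τ - τ²`. -/
theorem optimal_dual_CD12
    (τ : ℝ) (hτ : τ ∈ Set.Ioo (0 : ℝ) 1) (hτeq : τ * Real.exp (1 - τ) = 2 / 3)
    (q₁ q₂ : ℝ → ℝ)
    (hq₁a : ∀ x ∈ Set.Ioo (0 : ℝ) τ, q₁ x = 0)
    (hq₁b : ∀ x ∈ Set.Ico τ (2 / 3 : ℝ), q₁ x = 2 * Real.log (3 * x / 2) - 2 * x + 2)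
    (hq₁c : ∀ x ∈ Set.Icc (2 / 3 : ℝ) 1, q₁ x = x)
    (hq₂a : ∀ x ∈ Set.Ioo (0 : ℝ) (2 / 3 : ℝ), q₂ x = 0)
    (hq₂b : ∀ x ∈ Set.Icc (2 / 3 : ℝ) 1, q₂ x = 3 * x - 2) :
    (∀ x ∈ Set.Ioc (0 : ℝ) 1, 0 ≤ q₁ x ∧ 0 ≤ q₂ x) ∧
    (∀ x ∈ Set.Ioc (0 : ℝ) 1,
      2 - x ≤ q₁ x + (1 / x) * ∫ y in x..(1 : ℝ), (q₁ y + q₂ y)) ∧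
    (∀ x ∈ Set.Icc τ 1,
      q₁ x + (1 / x) * (∫ y in x..(1 : ℝ), (q₁ y + q₂ y)) = 2 - x) ∧
    (∀ x ∈ Set.Ioc (0 : ℝ) 1,
      x ≤ q₂ x + (1 / x) * ∫ y in x..(1 : ℝ), (q₁ y + q₂ y)) ∧
    (∀ x ∈ Set.Icc (2 / 3 : ℝ) 1,
      q₂ x + (1 / x) * (∫ y in x..(1 : ℝ), (q₁ y + q₂ y)) = x) ∧
    (∫ x in (0 : ℝ)..1, (q₁ x + q₂ x)) = 2 * τ - τ ^ 2 := by
  have h : CD12Dual τ q₁ q₂ := ⟨hτ, hτeq, hq₁a, hq₁b, hq₁c, hq₂a, hq₂b⟩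
  exact ⟨h.nonneg, h.constraint_one_le, h.constraint_one_eq, h.constraint_two_le,
    h.constraint_two_eq, h.integral_of_le_tau le_rfl h.mem_Ioo.1.le⟩
end
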